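/- arXiv:1501.07036 — 10 statements merged into one kernel-verified Lean document; each statement's English description precedes it below -/
import Mathlib

section
/- Let N ≥ 1 and let M ⊆ ℝ^N be a closed set. Suppose that the set M₀ = {x ∈ M : the straight line segment [x,y] is contained in M for every y ∈ M} has non-empty interior. Then M is locally downwards closed. -/
/-- `M` is downwards closed relative to the open set `U` and the vector `u`. -/
def DownwardsClosedRel {N : ℕ} (M U : Set (Fin N → ℝ)) (u : Fin N → ℝ) : Prop :=
  IsClosed M ∧ ∀ y ∈ U ∩ M, ∀ t : ℝ, 0 < t → y - t • u ∈ U → y - t • u ∈ interior M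

/-- `M` is locally downwards closed. -/
def LocallyDownwardsClosed {N : ℕ} (M : Set (Fin N → ℝ)) : Prop :=
  IsClosed M ∧ ∀ x : Fin N → ℝ, ∃ (U : Set (Fin N → ℝ)) (u : Fin N → ℝ),
    IsOpen U ∧ x ∈ U ∧ u ≠ 0 ∧ DownwardsClosedRel M U u

theorem statement0 {N : ℕ} (hN : 1 ≤ N) (M : Set (Fin N → ℝ)) (hM : IsClosed M)
    (h : (interior {x | x ∈ M ∧ ∀ y ∈ M, segment ℝ x y ⊆ M}).Nonempty) :
    LocallyDownwardsClosed M := by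
  set M₀ : Set (Fin N → ℝ) := {x | x ∈ M ∧ ∀ y ∈ M, segment ℝ x y ⊆ M} with hM₀def
  obtain ⟨z, hz⟩ := h
  obtain ⟨ε, εpos, hball⟩ := Metric.mem_nhds_iff.mp (mem_interior_iff_mem_nhds.mp hz)
  have cone : ∀ y ∈ M, ∀ t : ℝ, 0 < t → t ≤ 1 →
      Metric.ball (y + t • (z - y)) (t * ε) ⊆ M := by
    intro y hy t ht ht1 w hw
    set c := y + t • (z - y) with hc
    set z' := z + t⁻¹ • (w - c) with hz'
    have hz'M₀ : z' ∈ M₀ := by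
      apply hball
      rw [Metric.mem_ball, dist_eq_norm]
      have h1 : z' - z = t⁻¹ • (w - c) := by simp [hz']
      rw [h1, norm_smul]
      rw [Metric.mem_ball, dist_eq_norm] at hw
      have h2 := mul_lt_mul_of_pos_left hw (inv_pos.mpr ht)
      calc ‖(t⁻¹ : ℝ)‖ * ‖w - c‖ = t⁻¹ * ‖w - c‖ := by
            rw [Real.norm_eq_abs, abs_of_pos (inv_pos.mpr ht)]
        _ < t⁻¹ * (t * ε) := h2
        _ = ε := by field_simp
    have hseg := hz'M₀.2 y hy
    have hw' : w ∈ segment ℝ z' y := by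
      refine ⟨t, 1 - t, le_of_lt ht, by linarith, by ring, ?_⟩
      have h3 : t • z' = t • z + (w - c) := by
        rw [hz', smul_add, smul_smul, mul_inv_cancel₀ (ne_of_gt ht), one_smul]
      rw [h3, hc]
      module
    exact hseg hw'
  refine ⟨hM, fun x => ?_⟩
  by_cases hx : x = z
  · refine ⟨interior M₀, fun _ => 1, isOpen_interior, hx ▸ hz, ?_, hM, ?_⟩
    · intro h0
      exact one_ne_zero (congrFun h0 ⟨0, hN⟩)
    · intro y hy t ht hp
      exact interior_mono (fun a ha => ha.1) hp
  · set d := dist x z with hd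
    have dpos : 0 < d := dist_pos.mpr hx
    set r := min (d/4) (ε/2) with hr
    have rpos : 0 < r := lt_min (by linarith) (by linarith)
    refine ⟨Metric.ball x r, x - z, Metric.isOpen_ball, Metric.mem_ball_self rpos,
      sub_ne_zero.mpr hx, hM, ?_⟩
    rintro y ⟨hyU, hyM⟩ t ht hpU
    set p := y - t • (x - z) with hp
    have hr1 : r ≤ d / 4 := min_le_left _ _
    have hr2 : r ≤ ε / 2 := min_le_right _ _
    have hpy : dist p y = t * d := by
      rw [dist_eq_norm, hp]
      simp only [sub_sub_cancel_left, norm_neg, norm_smul, Real.norm_eq_abs,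
        abs_of_pos ht]
      rw [hd, dist_eq_norm]
    have h2 : dist p x < r := Metric.mem_ball.mp hpU
    have h3 : dist x y < r := by rw [dist_comm]; exact Metric.mem_ball.mp hyU
    have htri := dist_triangle p x y
    have ht1 : t ≤ 1 := by nlinarith
    have hpc : p - (y + t • (z - y)) = t • (y - x) := by
      rw [hp]; module
    have hpmem : p ∈ Metric.ball (y + t • (z - y)) (t * ε) := by
      rw [Metric.mem_ball, dist_eq_norm, hpc, norm_smul, Real.norm_eq_abs,
        abs_of_pos ht]
      have hyx : ‖y - x‖ < ε := by
        rw [← dist_eq_norm, dist_comm]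
        calc dist x y < r := h3
          _ ≤ ε / 2 := hr2
          _ < ε := by linarith
      exact mul_lt_mul_of_pos_left hyx ht
    exact interior_maximal (cone y hyM t ht ht1) Metric.isOpen_ball hpmem
end

section
/- Let N ≥ 1, let U ⊆ ℝ^N be a convex open set, let k ≥ 1, let u₁, …, u_k ∈ ℝ^N, and let M ⊆ ℝ^N be a closed set that is downwards closed relative to U and u_i for each 1 ≤ i ≤ k. Fix x ∈ U with x ∉ interior(M), and numbers t_i > 0 (1 ≤ i ≤ k) such that the points x_i = x + t_i·u_i belong to U \ M. Then M ∩ conv(x₁, …, x_k) = ∅, where conv denotes the convex hull. -/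
theorem statement2 {N k : ℕ} (hN : 1 ≤ N) (hk : 1 ≤ k)
    (U : Set (Fin N → ℝ)) (hUopen : IsOpen U) (hUconv : Convex ℝ U)
    (u : Fin k → (Fin N → ℝ))
    (M : Set (Fin N → ℝ)) (hM : IsClosed M)
    (hdc : ∀ i : Fin k, DownwardsClosedRel M U (u i))
    (x : Fin N → ℝ) (hxU : x ∈ U) (hx : x ∉ interior M)
    (t : Fin k → ℝ) (ht : ∀ i, 0 < t i)
    (hxi : ∀ i, x + t i • u i ∈ U \ M) :
    M ∩ convexHull ℝ (Set.range fun i => x + t i • u i) = ∅ := by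
  classical
  have hfU : ∀ i : Fin k, x + t i • u i ∈ U := fun i => (hxi i).1
  ext y
  simp only [Set.mem_inter_iff, Set.mem_empty_iff_false, iff_false, not_and]
  intro hyM hyhull
  rw [convexHull_eq] at hyhull
  obtain ⟨ι, T, w, z, hw0, hw1, hzmem, hyc⟩ := hyhull
  have hzU : ∀ i ∈ T, z i ∈ U := by
    intro i hi
    obtain ⟨j, hj⟩ := hzmem i hi
    rw [← hj]; exact hfU j
  set g : Finset ι → (Fin N → ℝ) := fun S => x + ∑ i ∈ S, w i • (z i - x) with hg
  -- every partial point lies in U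
  have hgU : ∀ S : Finset ι, S ⊆ T → g S ∈ U := by
    intro S hS
    have hσ0 : 0 ≤ ∑ i ∈ S, w i := Finset.sum_nonneg fun i hi => hw0 i (hS hi)
    have hσ1 : ∑ i ∈ S, w i ≤ 1 := by
      rw [← hw1]
      exact Finset.sum_le_sum_of_subset_of_nonneg hS (fun i hi _ => hw0 i hi)
    have hmem := hUconv.sum_mem (t := insert none (S.image some))
      (w := fun o => Option.elim o (1 - ∑ i ∈ S, w i) w)
      (z := fun o => Option.elim o x z)
      (by
        intro o ho
        rcases o with _ | i
        · simpa using sub_nonneg.2 hσ1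
        · simp only [Finset.mem_insert, Finset.mem_image] at ho
          rcases ho with h | ⟨j, hj, hji⟩
          · exact absurd h (by simp)
          · cases Option.some.inj hji
            exact hw0 _ (hS hj))
      (by
        rw [Finset.sum_insert (by simp), Finset.sum_image (by simp)]
        simp only [Option.elim]
        ring)
      (by
        intro o ho
        rcases o with _ | i
        · exact hxU
        · simp only [Finset.mem_insert, Finset.mem_image] at ho
          rcases ho with h | ⟨j, hj, hji⟩
          · exact absurd h (by simp)
          · cases Option.some.inj hji
            exact hzU _ (hS hj))
    rw [Finset.sum_insert (by simp), Finset.sum_image (by simp)] at hmem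
    simp only [Option.elim] at hmem
    convert hmem using 1
    rw [hg]
    simp only [smul_sub]
    rw [Finset.sum_sub_distrib, ← Finset.sum_smul, sub_smul, one_smul]
    abel
  -- main induction
  have key : ∀ S : Finset ι, S ⊆ T → g S ∈ M → (∃ i ∈ S, 0 < w i) → x ∈ interior M := by
    intro S
    induction S using Finset.induction_on with
    | empty => rintro _ _ ⟨i, hi, _⟩; exact absurd hi (by simp)
    | @insert a S ha ih =>
      intro hsub hmem hex
      have haT : a ∈ T := hsub (Finset.mem_insert_self a S)
      have hST : S ⊆ T := fun i hi => hsub (Finset.mem_insert_of_mem hi)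
      have hgins : g (insert a S) = g S + w a • (z a - x) := by
        rw [hg]; simp only
        rw [Finset.sum_insert ha]; abel
      rcases lt_or_eq_of_le (hw0 a haT) with hwa | hwa
      · -- w a > 0 : step down
        obtain ⟨j, hj⟩ := hzmem a haT
        have hdir : w a • (z a - x) = (w a * t j) • u j := by
          rw [← hj]
          simp only [add_sub_cancel_left, smul_smul]
        have hgS : g S = g (insert a S) - (w a * t j) • u j := by
          rw [hgins, hdir]; abel
        have hpos : 0 < w a * t j := mul_pos hwa (ht j)
        have hgSU : g S ∈ U := hgU S hST
        have hginsU : g (insert a S) ∈ U := hgU _ hsub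
        have hint : g S ∈ interior M := by
          rw [hgS]
          exact (hdc j).2 _ ⟨hginsU, hmem⟩ _ hpos (by rw [← hgS]; exact hgSU)
        by_cases hex' : ∃ i ∈ S, 0 < w i
        · exact ih hST (interior_subset hint) hex'
        · -- all weights in S vanish, so g S = x
          have hzero : ∀ i ∈ S, w i = 0 := by
            intro i hi
            rcases lt_or_eq_of_le (hw0 i (hST hi)) with h | h
            · exact absurd ⟨i, hi, h⟩ hex'
            · exact h.symm
          have : g S = x := by
            rw [hg]; simp only
            rw [Finset.sum_eq_zero (fun i hi => by rw [hzero i hi, zero_smul]), add_zero]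
          rwa [this] at hint
      · -- w a = 0 : skip
        have hgeq : g (insert a S) = g S := by
          rw [hgins, ← hwa, zero_smul, add_zero]
        obtain ⟨i, hi, hwi⟩ := hex
        rcases Finset.mem_insert.1 hi with rfl | hi'
        · exact absurd hwi (by rw [← hwa]; exact lt_irrefl 0)
        · exact ih hST (hgeq ▸ hmem) ⟨i, hi', hwi⟩
  -- apply to T
  have hgT : g T = y := by
    rw [hg]; simp only [smul_sub]
    rw [Finset.sum_sub_distrib, ← Finset.sum_smul, hw1, one_smul]
    rw [← Finset.centerMass_eq_of_sum_1 _ _ hw1] at *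
    rw [hyc]; abel
  have hexT : ∃ i ∈ T, 0 < w i := by
    by_contra h
    push_neg at h
    have : ∑ i ∈ T, w i = 0 :=
      Finset.sum_eq_zero fun i hi => le_antisymm (h i hi) (hw0 i hi)
    rw [hw1] at this; norm_num at this
  exact hx (key T le_rfl (hgT ▸ hyM) hexT)
end

section
/- Let X be a real normed space, ξ > 0, U ⊆ X an open set, (U_j)_{j=1}^k a finite open cover of U, and f_j : U → [0,1], 1 ≤ j ≤ k, a partition of unity subordinated to this cover (i.e. Σ_{j=1}^k f_j(x) = 1 for all x ∈ U and f_j vanishes outside U_j) such that each f_j is H-Lipschitz for some H > 0. Let ψ_j : U → X, 1 ≤ j ≤ k, be maps such that Lip(ψ_j − I) ≤ ξ and sup_{x∈U} ‖ψ_j(x) − x‖ ≤ ξ for each j. Then the map ψ : U → X defined by ψ(x) = Σ_{j=1}^k f_j(x)·ψ_j(x) satisfies Lip(ψ − I) ≤ (1 + H·k)·ξ and sup_{x∈U} ‖ψ(x) − x‖ ≤ ξ. -/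
/-- Gluing Lipschitz perturbations of the identity with a Lipschitz partition of unity. -/
theorem statement4 {X : Type*} [NormedAddCommGroup X] [NormedSpace ℝ X]
    (ξ : ℝ) (hξ : 0 < ξ) (U : Set X) (hU : IsOpen U)
    (k : ℕ) (Uj : Fin k → Set X) (hUjopen : ∀ j, IsOpen (Uj j))
    (hcover : U ⊆ ⋃ j, Uj j)
    (H : ℝ) (hH : 0 < H)
    (f : Fin k → X → ℝ)
    (hf01 : ∀ j, ∀ x ∈ U, 0 ≤ f j x ∧ f j x ≤ 1)
    (hsum : ∀ x ∈ U, ∑ j, f j x = 1)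
    (hsubord : ∀ j, ∀ x ∈ U, x ∉ Uj j → f j x = 0)
    (hfLip : ∀ j, ∀ x ∈ U, ∀ y ∈ U, |f j x - f j y| ≤ H * ‖x - y‖)
    (ψ : Fin k → X → X)
    (hψLip : ∀ j, ∀ x ∈ U, ∀ y ∈ U, ‖(ψ j x - x) - (ψ j y - y)‖ ≤ ξ * ‖x - y‖)
    (hψdist : ∀ j, ∀ x ∈ U, ‖ψ j x - x‖ ≤ ξ) :
    (∀ x ∈ U, ∀ y ∈ U,
        ‖((∑ j, f j x • ψ j x) - x) - ((∑ j, f j y • ψ j y) - y)‖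
          ≤ (1 + H * k) * ξ * ‖x - y‖) ∧
    (∀ x ∈ U, ‖(∑ j, f j x • ψ j x) - x‖ ≤ ξ) := by
  have key : ∀ x ∈ U, (∑ j, f j x • ψ j x) - x = ∑ j, f j x • (ψ j x - x) := by
    intro x hx
    have : (∑ j, f j x • (ψ j x - x)) = (∑ j, f j x • ψ j x) - (∑ j, f j x) • x := by
      rw [Finset.sum_smul]
      simp [smul_sub, Finset.sum_sub_distrib]
    rw [this, hsum x hx, one_smul]
  constructor
  · intro x hx y hy
    rw [key x hx, key y hy]
    have hdecomp : (∑ j, f j x • (ψ j x - x)) - (∑ j, f j y • (ψ j y - y))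
        = ∑ j, (f j x • ((ψ j x - x) - (ψ j y - y)) + (f j x - f j y) • (ψ j y - y)) := by
      rw [← Finset.sum_sub_distrib]
      congr 1; funext j
      module
    rw [hdecomp]
    calc ‖∑ j, (f j x • ((ψ j x - x) - (ψ j y - y)) + (f j x - f j y) • (ψ j y - y))‖
        ≤ ∑ j, ‖f j x • ((ψ j x - x) - (ψ j y - y)) + (f j x - f j y) • (ψ j y - y)‖ :=
          norm_sum_le _ _
      _ ≤ ∑ j, (f j x * (ξ * ‖x - y‖) + H * ‖x - y‖ * ξ) := by
          apply Finset.sum_le_sum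
          intro j _
          calc ‖f j x • ((ψ j x - x) - (ψ j y - y)) + (f j x - f j y) • (ψ j y - y)‖
              ≤ ‖f j x • ((ψ j x - x) - (ψ j y - y))‖ + ‖(f j x - f j y) • (ψ j y - y)‖ :=
                norm_add_le _ _
            _ ≤ f j x * (ξ * ‖x - y‖) + H * ‖x - y‖ * ξ := by
                gcongr ?_ + ?_
                · rw [norm_smul, Real.norm_eq_abs, abs_of_nonneg (hf01 j x hx).1]
                  exact mul_le_mul_of_nonneg_left (hψLip j x hx y hy) (hf01 j x hx).1
                · rw [norm_smul, Real.norm_eq_abs]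
                  exact mul_le_mul (hfLip j x hx y hy) (hψdist j y hy) (norm_nonneg _)
                    (by positivity)
      _ = (1 + H * k) * ξ * ‖x - y‖ := by
          rw [Finset.sum_add_distrib, ← Finset.sum_mul, hsum x hx, Finset.sum_const,
            Finset.card_univ, Fintype.card_fin]
          ring
  · intro x hx
    rw [key x hx]
    calc ‖∑ j, f j x • (ψ j x - x)‖ ≤ ∑ j, ‖f j x • (ψ j x - x)‖ := norm_sum_le _ _
      _ ≤ ∑ j, f j x * ξ := by
          apply Finset.sum_le_sum
          intro j _
          rw [norm_smul, Real.norm_eq_abs, abs_of_nonneg (hf01 j x hx).1]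
          exact mul_le_mul_of_nonneg_left (hψdist j x hx) (hf01 j x hx).1
      _ = ξ := by rw [← Finset.sum_mul, hsum x hx, one_mul]
end

section
/- Let N ≥ 1 and let M ⊆ ℝ^N be a locally downwards closed set. Then for every x ∈ M there exists an open set V containing x such that M ∩ V is path-connected (in particular, connected). -/
/-- Every point of a locally downwards closed set has an open neighbourhood `V`
such that `M ∩ V` is path-connected. -/
theorem statement6 {N : ℕ} (hN : 1 ≤ N) (M : Set (Fin N → ℝ))
    (hM : LocallyDownwardsClosed M) (x : Fin N → ℝ) (hx : x ∈ M) :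
    ∃ V : Set (Fin N → ℝ), IsOpen V ∧ x ∈ V ∧ IsPathConnected (M ∩ V) := by
  obtain ⟨hMcl, h⟩ := hM
  obtain ⟨U, u, hUopen, hxU, hu, -, hdown⟩ := h x
  obtain ⟨r, hr, hball⟩ := Metric.isOpen_iff.mp hUopen x hxU
  have hc : (0:ℝ) < ‖u‖ := norm_pos_iff.mpr hu
  set c := ‖u‖ with hcdef
  set t := r / (4 * c) with htdef
  have htpos : 0 < t := by positivity
  have htc : t * c = r / 4 := by
    rw [htdef, div_mul_eq_mul_div, mul_comm 4 c, ← div_div, mul_div_assoc,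
      mul_div_assoc, div_self hc.ne']
    ring
  have hdist : ∀ (z : Fin N → ℝ) (s : ℝ), 0 ≤ s → dist (z - s • u) z = s * c := by
    intro z s hs
    rw [dist_self_sub_left, norm_smul, Real.norm_eq_abs, abs_of_nonneg hs]
  set p := x - t • u with hpdef
  have hpU : p ∈ U := by
    apply hball
    rw [Metric.mem_ball, hdist x t htpos.le, htc]
    linarith
  have hpint : p ∈ interior M := hdown x ⟨hxU, hx⟩ t htpos hpU
  obtain ⟨δ, hδ, hδball⟩ := Metric.isOpen_iff.mp isOpen_interior p hpint
  set ε := min (δ / 2) (r / 2) with hεdef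
  have hε : 0 < ε := lt_min (by linarith) (by linarith)
  have hεδ : ε < δ := lt_of_le_of_lt (min_le_left _ _) (by linarith)
  have hεr : ε ≤ r / 2 := min_le_right _ _
  set V : Set (Fin N → ℝ) := ⋃ s ∈ Set.Icc (0:ℝ) t, Metric.ball (x - s • u) ε with hVdef
  have hVopen : IsOpen V := isOpen_biUnion fun s _ => Metric.isOpen_ball
  have hxV : x ∈ V := by
    apply Set.mem_biUnion (Set.left_mem_Icc.mpr htpos.le)
    simp [Metric.mem_ball, hε]
  -- membership criterion for V
  have hmemV : ∀ s ∈ Set.Icc (0:ℝ) t, ∀ z ∈ Metric.ball x ε, z - s • u ∈ V := by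
    intro s hs z hz
    apply Set.mem_biUnion hs
    rw [Metric.mem_ball] at hz ⊢
    calc dist (z - s • u) (x - s • u) = dist z x := dist_sub_right z x (s • u)
    _ < ε := hz
  have hVU : V ⊆ U := by
    intro y hy
    obtain ⟨s, hs, hy⟩ := Set.mem_iUnion₂.mp hy
    apply hball
    rw [Metric.mem_ball] at hy ⊢
    have h1 : dist (x - s • u) x = s * c := hdist x s hs.1
    have h2 : s * c ≤ t * c := mul_le_mul_of_nonneg_right hs.2 hc.le
    calc dist y x ≤ dist y (x - s • u) + dist (x - s • u) x := dist_triangle _ _ _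
    _ < ε + t * c := by rw [h1]; linarith
    _ ≤ r / 2 + r / 4 := by rw [htc]; linarith
    _ < r := by linarith
  -- bottom ball
  have hbot : Metric.ball p ε ⊆ M ∩ V := by
    intro w hw
    constructor
    · exact interior_subset (hδball (Metric.ball_subset_ball hεδ.le hw))
    · have : w = (w + t • u) - t • u := by abel
      rw [this]
      apply hmemV t (Set.right_mem_Icc.mpr htpos.le)
      rw [Metric.mem_ball]
      calc dist (w + t • u) x = dist (w + t • u) (p + t • u) := by rw [hpdef, sub_add_cancel]
      _ = dist w p := dist_add_right _ _ _
      _ < ε := hw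
  have hpMV : p ∈ M ∩ V := hbot (Metric.mem_ball_self hε)
  refine ⟨V, hVopen, hxV, p, hpMV, ?_⟩
  rintro y ⟨hyM, hyV⟩
  obtain ⟨s₀, hs₀, hy⟩ := Set.mem_iUnion₂.mp hyV
  rw [Metric.mem_ball] at hy
  set z := y + s₀ • u with hzdef
  have hyz : y = z - s₀ • u := by simp [hzdef]
  have hz : z ∈ Metric.ball x ε := by
    rw [Metric.mem_ball]
    calc dist z x = dist (y + s₀ • u) ((x - s₀ • u) + s₀ • u) := by rw [sub_add_cancel]
    _ = dist y (x - s₀ • u) := dist_add_right _ _ _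
    _ < ε := hy
  -- the descending path from y to z - t•u
  have hdesc : ∀ τ : ℝ, 0 ≤ τ → τ ≤ 1 → y - (τ * (t - s₀)) • u ∈ M ∩ V := by
    intro τ hτ0 hτ1
    have hts₀ : 0 ≤ t - s₀ := by linarith [hs₀.2]
    have hσ0 : 0 ≤ τ * (t - s₀) := mul_nonneg hτ0 hts₀
    have hσt : τ * (t - s₀) ≤ t - s₀ := by nlinarith
    have heq : y - (τ * (t - s₀)) • u = z - (s₀ + τ * (t - s₀)) • u := by
      rw [hyz]; module
    have hsIcc : s₀ + τ * (t - s₀) ∈ Set.Icc (0:ℝ) t := ⟨by linarith [hs₀.1], by linarith⟩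
    have hV' : y - (τ * (t - s₀)) • u ∈ V := by
      rw [heq]; exact hmemV _ hsIcc z hz
    refine ⟨?_, hV'⟩
    rcases eq_or_lt_of_le hσ0 with hσ | hσ
    · rw [← hσ]; simpa using hyM
    · exact interior_subset (hdown y ⟨hVU hyV, hyM⟩ _ hσ (hVU hV'))
  have hbotmem : y - (1 * (t - s₀)) • u ∈ Metric.ball p ε := by
    rw [Metric.mem_ball, one_mul, hyz]
    have : z - s₀ • u - (t - s₀) • u = z - t • u := by module
    rw [this, hpdef]
    calc dist (z - t • u) (x - t • u) = dist z x := dist_sub_right _ _ _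
    _ < ε := hz
  have J1 : JoinedIn (M ∩ V) y (y - (1 * (t - s₀)) • u) := by
    refine ⟨⟨⟨fun τ => y - ((τ : ℝ) * (t - s₀)) • u, by fun_prop⟩, by simp, rfl⟩, ?_⟩
    intro τ
    exact hdesc τ τ.2.1 τ.2.2
  have J2 : JoinedIn (M ∩ V) (y - (1 * (t - s₀)) • u) p := by
    have hconv : IsPathConnected (Metric.ball p ε) :=
      (convex_ball p ε).isPathConnected ⟨p, Metric.mem_ball_self hε⟩
    exact (hconv.joinedIn _ hbotmem _ (Metric.mem_ball_self hε)).mono hbot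
  exact (J1.trans J2).symm
end

section
/- Let N ≥ 1 and let M ⊆ ℝ^N be a compact and locally downwards closed set. Then M has only finitely many connected components. -/
/-!
Near a point `x` of `M`, choose the direction `u` and a small `t > 0`. The point `x - t • u`
lies in the interior of `M`, so a ball around it is contained in `M`. Every point `z` of `M`
close to `x` slides down the segment `[z, z - t • u] ⊆ M` into that ball, and so does `x`;
hence all points of `M` near `x` lie in the connected component of `x`. The map
`x ↦ connectedComponentIn M x` is therefore locally constant on the compact space `M`,
and so has finite range.
-/

open Topology Filter

theorem connectedComponentIn_eq_of_segment_subset {E : Type*} [AddCommGroup E] [Module ℝ E]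
    [TopologicalSpace E] [IsTopologicalAddGroup E] [ContinuousSMul ℝ E] {M : Set E} {a b : E}
    (h : segment ℝ a b ⊆ M) : connectedComponentIn M a = connectedComponentIn M b :=
  connectedComponentIn_eq <|
    (convex_segment a b).isPreconnected.subset_connectedComponentIn (left_mem_segment ℝ a b) h
      (right_mem_segment ℝ a b)

theorem DownwardsClosedRel.segment_subset {N : ℕ} {M U B : Set (Fin N → ℝ)} {u z : Fin N → ℝ}
    {t : ℝ} (h : DownwardsClosedRel M U u) (hB : Convex ℝ B) (hBU : B ⊆ U) (hz : z ∈ B)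
    (hzM : z ∈ M) (ht : 0 ≤ t) (hzt : z - t • u ∈ B) : segment ℝ z (z - t • u) ⊆ M := by
  rintro _ hw
  obtain ⟨θ, ⟨hθ0, -⟩, rfl⟩ := (segment_eq_image' ℝ z (z - t • u)) ▸ hw
  have hshift : z + θ • (z - t • u - z) = z - (θ * t) • u := by
    rw [sub_sub_cancel_left, smul_neg, mul_smul, sub_eq_add_neg]
  simp only [hshift] at hw ⊢
  rcases (mul_nonneg hθ0 ht).eq_or_lt with hθt | hθt
  · simpa [← hθt] using hzM
  · exact interior_subset (h.2 z ⟨hBU hz, hzM⟩ _ hθt (hBU (hB.segment_subset hz hzt hw)))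

theorem LocallyDownwardsClosed.eventually_connectedComponentIn_eq {N : ℕ}
    {M : Set (Fin N → ℝ)} (h : LocallyDownwardsClosed M) {x : Fin N → ℝ} (hx : x ∈ M) :
    ∀ᶠ z in 𝓝 x, z ∈ M → connectedComponentIn M z = connectedComponentIn M x := by
  obtain ⟨U, u, hU, hxU, -, hdc⟩ := h.2 x
  obtain ⟨r, hr, hBU⟩ := Metric.isOpen_iff.mp hU x hxU
  set B := Metric.ball x r
  have hxB : x ∈ B := Metric.mem_ball_self hr
  have hslide : Tendsto (fun t : ℝ => x - t • u) (𝓝[>] 0) (𝓝 x) := by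
    have hcont : Continuous fun t : ℝ => x - t • u := by fun_prop
    exact tendsto_nhdsWithin_of_tendsto_nhds (hcont.tendsto' 0 x (by simp))
  obtain ⟨t, htB, ht⟩ :=
    ((hslide.eventually (Metric.isOpen_ball.mem_nhds hxB)).and self_mem_nhdsWithin).exists
  set p := x - t • u
  have hp : p ∈ B ∩ interior M := ⟨htB, hdc.2 x ⟨hxU, hx⟩ t ht (hBU htB)⟩
  obtain ⟨δ, hδ, hδp⟩ := Metric.isOpen_iff.mp (Metric.isOpen_ball.inter isOpen_interior) p hp
  have hshift : Tendsto (fun z => z - t • u) (𝓝 x) (𝓝 p) := tendsto_id.sub_const _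
  filter_upwards [Metric.isOpen_ball.mem_nhds hxB,
    hshift.eventually (Metric.isOpen_ball.mem_nhds (Metric.mem_ball_self hδ))] with z hzB hzδ hzM
  have hball : Metric.ball p δ ⊆ B ∩ M := fun w hw ↦ ⟨(hδp hw).1, interior_subset (hδp hw).2⟩
  calc connectedComponentIn M z
      = connectedComponentIn M (z - t • u) := connectedComponentIn_eq_of_segment_subset <|
        hdc.segment_subset (convex_ball x r) hBU hzB hzM ht.le (hball hzδ).1
    _ = connectedComponentIn M p := connectedComponentIn_eq_of_segment_subset <|
        ((convex_ball p δ).segment_subset hzδ (Metric.mem_ball_self hδ)).trans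
          (hball.trans Set.inter_subset_right)
    _ = connectedComponentIn M x := (connectedComponentIn_eq_of_segment_subset <|
        hdc.segment_subset (convex_ball x r) hBU hxB hx ht.le htB).symm

theorem statement7_general {N : ℕ} (M : Set (Fin N → ℝ))
    (hMcpt : IsCompact M) (hMldc : LocallyDownwardsClosed M) :
    {C : Set (Fin N → ℝ) | ∃ x ∈ M, C = connectedComponentIn M x}.Finite := by
  have hloc : IsLocallyConstant fun x : M ↦ connectedComponentIn M x :=
    (IsLocallyConstant.iff_eventually_eq _).2 fun x ↦
      ((continuous_subtype_val.tendsto x).eventually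
        (hMldc.eventually_connectedComponentIn_eq x.2)).mono fun z hz ↦ hz z.2
  have : CompactSpace M := isCompact_iff_compactSpace.mp hMcpt
  refine hloc.range_finite.subset ?_
  rintro C ⟨x, hx, rfl⟩
  exact ⟨⟨x, hx⟩, rfl⟩

/-- A compact, locally downwards closed subset of `ℝ^N` has only finitely many
connected components. -/
theorem statement7 {N : ℕ} (hN : 1 ≤ N) (M : Set (Fin N → ℝ))
    (hMcpt : IsCompact M) (hMldc : LocallyDownwardsClosed M) :
    {C : Set (Fin N → ℝ) | ∃ x ∈ M, C = connectedComponentIn M x}.Finite :=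
  statement7_general M hMcpt hMldc
end

section
/- Let N ≥ 1 and let M ⊆ ℝ^N be a compact and locally downwards closed set. Then every connected component of M is compact, open in M, and itself locally downwards closed. -/
/-!
Near a point `z` of `M`, pushing a point `y ∈ M` slightly in the direction `-u` moves it along
a segment inside `M` into the interior of `M`, and for `y` close to `z` all these pushed points
lie in one small ball inside the interior of `M` around the push of `z`. Hence
`M ∩ B ⊆ connectedComponentIn M z` for a ball `B` about `z`, so the components of `M` are open
in `M`; they are closed in the compact set `M`, and intersecting the neighbourhoods `U` with the
open set cutting out a component keeps the downwards-closedness.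
-/

open Filter Topology

section Components

variable {X : Type*} [TopologicalSpace X] {M : Set X}

theorem IsClosed.connectedComponentIn (hM : IsClosed M) (x : X) :
    IsClosed (connectedComponentIn M x) := by
  by_cases hx : x ∈ M
  · exact isClosed_of_closure_subset
      (isPreconnected_connectedComponentIn.closure.subset_connectedComponentIn
        (subset_closure (mem_connectedComponentIn hx))
        (closure_minimal (connectedComponentIn_subset M x) hM))
  · rw [connectedComponentIn_eq_empty hx]
    exact isClosed_empty

theorem exists_isOpen_connectedComponentIn_eq_inter
    (h : ∀ z ∈ M, connectedComponentIn M z ∈ 𝓝[M] z) (x : X) :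
    ∃ V : Set X, IsOpen V ∧ connectedComponentIn M x = M ∩ V := by
  refine ⟨interior (Mᶜ ∪ connectedComponentIn M x), isOpen_interior, subset_antisymm ?_ ?_⟩
  · intro w hw
    have hwM := connectedComponentIn_subset M x hw
    have hnhds := h w hwM
    rw [← connectedComponentIn_eq hw, mem_nhdsWithin_iff_eventually] at hnhds
    refine ⟨hwM, mem_interior_iff_mem_nhds.2 ?_⟩
    filter_upwards [hnhds] with v hv using imp_iff_not_or.1 hv
  · rintro w ⟨hwM, hwV⟩
    exact (interior_subset hwV).resolve_left (not_not_intro hwM)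

end Components

section Downwards

variable {E : Type*} [NormedAddCommGroup E] [NormedSpace ℝ E] {M W : Set E} {u : E}

theorem sub_smul_mem_connectedComponentIn (hW : Convex ℝ W)
    (hdown : ∀ y ∈ W ∩ M, ∀ t : ℝ, 0 < t → y - t • u ∈ W → y - t • u ∈ interior M)
    {y : E} (hy : y ∈ W ∩ M) {t : ℝ} (ht : 0 < t) (hyt : y - t • u ∈ W) :
    y - t • u ∈ connectedComponentIn M y := by
  have hseg : segment ℝ y (y - t • u) ⊆ M := by
    intro w hw
    have hwW : w ∈ W := hW.segment_subset hy.1 hyt hw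
    rw [segment_eq_image] at hw
    obtain ⟨θ, ⟨hθ0, -⟩, rfl⟩ := hw
    have hform : (1 - θ) • y + θ • (y - t • u) = y - (θ * t) • u := by module
    simp only [hform] at hwW ⊢
    rcases hθ0.eq_or_lt with rfl | hθ
    · simpa using hy.2
    · exact interior_subset (hdown y hy _ (mul_pos hθ ht) hwW)
  exact (convex_segment _ _).isPreconnected.subset_connectedComponentIn
    (left_mem_segment _ _ _) hseg (right_mem_segment _ _ _)

theorem connectedComponentIn_mem_nhdsWithin {U : Set E} {z : E} (hU : IsOpen U) (hzU : z ∈ U)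
    (hzM : z ∈ M)
    (hdown : ∀ y ∈ U ∩ M, ∀ t : ℝ, 0 < t → y - t • u ∈ U → y - t • u ∈ interior M) :
    connectedComponentIn M z ∈ 𝓝[M] z := by
  obtain ⟨r, hr, hball⟩ := Metric.isOpen_iff.1 hU z hzU
  have hdownW : ∀ y ∈ Metric.ball z r ∩ M, ∀ t : ℝ, 0 < t → y - t • u ∈ Metric.ball z r →
      y - t • u ∈ interior M :=
    fun y hy t ht hyt => hdown y ⟨hball hy.1, hy.2⟩ t ht (hball hyt)
  have hpush : Tendsto (fun t : ℝ => z - t • u) (𝓝[>] 0) (𝓝 z) := by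
    refine ((?_ : Continuous fun t : ℝ => z - t • u).tendsto' 0 z (by simp)).mono_left
      nhdsWithin_le_nhds
    fun_prop
  obtain ⟨t, hzt, ht⟩ :=
    ((hpush.eventually (Metric.isOpen_ball.mem_nhds (Metric.mem_ball_self hr))).and
      self_mem_nhdsWithin).exists
  have hzt_int : z - t • u ∈ interior M ∩ Metric.ball z r :=
    ⟨hdownW z ⟨Metric.mem_ball_self hr, hzM⟩ t ht hzt, hzt⟩
  obtain ⟨δ, hδ, hδB⟩ := Metric.isOpen_iff.1 (isOpen_interior.inter Metric.isOpen_ball) _ hzt_int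
  have hB : Metric.ball (z - t • u) δ ⊆ connectedComponentIn M (z - t • u) :=
    (convex_ball _ _).isPreconnected.subset_connectedComponentIn (Metric.mem_ball_self hδ)
      fun w hw => interior_subset (hδB hw).1
  refine Metric.mem_nhdsWithin_iff.2 ⟨min r δ, lt_min hr hδ, ?_⟩
  rintro y ⟨hy, hyM⟩
  rw [Metric.mem_ball, lt_min_iff] at hy
  have hyt : y - t • u ∈ Metric.ball (z - t • u) δ := by
    rw [Metric.mem_ball, dist_sub_right]
    exact hy.2
  have hyB : y ∈ Metric.ball z r ∩ M := ⟨hy.1, hyM⟩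
  rw [connectedComponentIn_eq (sub_smul_mem_connectedComponentIn (convex_ball z r) hdownW
      ⟨Metric.mem_ball_self hr, hzM⟩ ht hzt),
    connectedComponentIn_eq (hB hyt),
    ← connectedComponentIn_eq (sub_smul_mem_connectedComponentIn (convex_ball z r) hdownW
      hyB ht (hδB hyt).2)]
  exact mem_connectedComponentIn hyM

end Downwards

section LocallyDownwardsClosed

variable {N : ℕ} {M U V C : Set (Fin N → ℝ)} {u : Fin N → ℝ}

theorem DownwardsClosedRel.inter_isOpen (h : DownwardsClosedRel M U u) (hV : IsOpen V)
    (hMV : IsClosed (M ∩ V)) : DownwardsClosedRel (M ∩ V) (U ∩ V) u := by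
  refine ⟨hMV, fun y ⟨⟨hyU, _⟩, hyM, _⟩ t ht ⟨hytU, hytV⟩ => ?_⟩
  rw [interior_inter, hV.interior_eq]
  exact ⟨h.2 y ⟨hyU, hyM⟩ t ht hytU, hytV⟩

theorem LocallyDownwardsClosed.of_eq_inter_isOpen (hM : LocallyDownwardsClosed M)
    (hC : IsClosed C) (hV : IsOpen V) (hCV : C = M ∩ V) : LocallyDownwardsClosed C := by
  subst hCV
  refine ⟨hC, fun z => ?_⟩
  obtain ⟨U, u, hU, hzU, hu, hdc⟩ := hM.2 z
  by_cases hz : z ∈ M ∩ V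
  · exact ⟨U ∩ V, u, hU.inter hV, ⟨hzU, hz.2⟩, hu, hdc.inter_isOpen hV hC⟩
  · exact ⟨(M ∩ V)ᶜ, u, hC.isOpen_compl, hz, hu, hC, fun y hy => absurd hy.2 hy.1⟩

end LocallyDownwardsClosed

theorem statement8_general {N : ℕ} (M : Set (Fin N → ℝ))
    (hMcpt : IsCompact M) (hMldc : LocallyDownwardsClosed M)
    (x : Fin N → ℝ) :
    IsCompact (connectedComponentIn M x) ∧
    (∃ V : Set (Fin N → ℝ), IsOpen V ∧ connectedComponentIn M x = M ∩ V) ∧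
    LocallyDownwardsClosed (connectedComponentIn M x) := by
  have hnhds : ∀ z ∈ M, connectedComponentIn M z ∈ 𝓝[M] z := fun z hzM => by
    obtain ⟨U, u, hU, hzU, -, hdc⟩ := hMldc.2 z
    exact connectedComponentIn_mem_nhdsWithin hU hzU hzM hdc.2
  have hclosed := hMldc.1.connectedComponentIn x
  obtain ⟨V, hV, hCV⟩ := exists_isOpen_connectedComponentIn_eq_inter hnhds x
  exact ⟨hMcpt.of_isClosed_subset hclosed (connectedComponentIn_subset M x), ⟨V, hV, hCV⟩,
    hMldc.of_eq_inter_isOpen hclosed hV hCV⟩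

/-- Every connected component of a compact, locally downwards closed `M ⊆ ℝ^N`
is compact, open in `M`, and locally downwards closed. -/
theorem statement8 {N : ℕ} (hN : 1 ≤ N) (M : Set (Fin N → ℝ))
    (hMcpt : IsCompact M) (hMldc : LocallyDownwardsClosed M)
    (x : Fin N → ℝ) (hx : x ∈ M) :
    IsCompact (connectedComponentIn M x) ∧
    (∃ V : Set (Fin N → ℝ), IsOpen V ∧ connectedComponentIn M x = M ∩ V) ∧
    LocallyDownwardsClosed (connectedComponentIn M x) :=
  statement8_general M hMcpt hMldc x
end

section
/- Let N ≥ 1, let ‖·‖ be a norm on ℝ^N, let M ⊆ ℝ^N be a bounded set, r > 0, and let η : ℝ^N → [0,∞) be a continuously differentiable function with compact support contained in the closed Euclidean ball B(0,r) and ∫_{ℝ^N} η(x) dx = 1. For a Lipschitz function f : M → ℝ define f_r(x) = ∫_{ℝ^N} η(x − y)·f(y) dy for x ∈ M(r), where M(r) = {x ∈ ℝ^N : d₂(x, ℝ^N \ M) > r}. Then f_r is differentiable at every point of the open set M(r), and for every ε > 0 there exists δ > 0 (depending only on ε, M, N and η, not on f) such that for every Lipschitz f : M → ℝ, every x ∈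 M(r) and every h ∈ ℝ^N with ‖h‖ ≤ δ and x + h ∈ M(r), one has |f_r(x + h) − f_r(x) − Df_r(x)[h]| ≤ ε·Lip(f)·‖h‖. -/
/-!
Write `f_r(x + h) - f_r(x) - Df_r(x)[h]` as the integral of `f(y)` against the first-order
Taylor remainder `η(z + h) - η(z) - Dη(z)[h]` at `z = x - y`. This kernel has integral zero, so
`f(y)` may be replaced by `f(y) - f(x)`, which is `O(Lip f)` on the (bounded) support of the
kernel; and by uniform continuity of `Dη` the kernel is `o(‖h‖)` uniformly in `z`. All norms on
`ℝ^N` being equivalent, it suffices to work with the Euclidean norm, and McShane's extension of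
`f` from `M` to `ℝ^N` does not change `f_r` on the open set `M(r)`.
-/

open MeasureTheory Metric Set Function Filter Topology ContinuousLinearMap
open scoped Convolution NNReal

namespace Seminorm

variable {E : Type*} [NormedAddCommGroup E] [NormedSpace ℝ E] [FiniteDimensional ℝ E]

theorem continuous_of_finiteDimensional (p : Seminorm ℝ E) : Continuous p :=
  p.convexOn.locallyLipschitz.continuous

theorem exists_le_mul_norm (p : Seminorm ℝ E) : ∃ C > 0, ∀ x, p x ≤ C * ‖x‖ :=
  p.bound_of_continuous_normedSpace p.continuous_of_finiteDimensional

theorem exists_mul_norm_le (p : Seminorm ℝ E) (hp : ∀ x, p x = 0 → x = 0) :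
    ∃ c > 0, ∀ x, c * ‖x‖ ≤ p x := by
  rcases subsingleton_or_nontrivial E with hE | hE
  · exact ⟨1, one_pos, fun x => by simp [Subsingleton.elim x 0]⟩
  obtain ⟨z, hz, hmin⟩ := (isCompact_sphere (0 : E) 1).exists_isMinOn
    (NormedSpace.sphere_nonempty.2 zero_le_one) p.continuous_of_finiteDimensional.continuousOn
  have hz0 : z ≠ 0 := ne_zero_of_mem_sphere one_ne_zero ⟨z, hz⟩
  refine ⟨p z, (apply_nonneg p z).lt_of_ne' (mt (hp z) hz0), fun x => ?_⟩
  rcases eq_or_ne x 0 with rfl | hx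
  · simp
  have hx' : 0 < ‖x‖ := norm_pos_iff.2 hx
  have hmin_x : p z ≤ p (‖x‖⁻¹ • x) :=
    hmin (show ‖x‖⁻¹ • x ∈ sphere (0 : E) 1 by simp [norm_smul, hx'.ne'])
  rw [map_smul_eq_mul, norm_inv, norm_norm] at hmin_x
  calc p z * ‖x‖ ≤ (‖x‖⁻¹ * p x) * ‖x‖ := by gcongr
    _ = p x := by field_simp

end Seminorm

section Mollify

variable {E : Type*} [NormedAddCommGroup E] [MeasurableSpace E] {μ : Measure E}
  {η g F G : E → ℝ}

noncomputable def mollify (μ : Measure E) (η F : E → ℝ) (x : E) : ℝ :=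
  ∫ y, η (x - y) * F y ∂μ

theorem mollify_congr {x : E} {r : ℝ} (hη : tsupport η ⊆ closedBall 0 r)
    (hFG : EqOn F G (closedBall x r)) : mollify μ η F x = mollify μ η G x := by
  refine integral_congr_ae (Eventually.of_forall fun y => ?_)
  by_cases hy : x - y ∈ tsupport η
  · have : y ∈ closedBall x r := by
      rw [mem_closedBall, dist_comm, dist_eq_norm]
      simpa using hη hy
    simp only [hFG this]
  · simp [image_eq_zero_of_notMem_tsupport hy]

theorem mollify_eq_convolution : mollify μ η F = F ⋆[mul ℝ ℝ, μ] η := by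
  ext x
  simp [mollify, convolution_def, mul_comm]

theorem integrable_comp_sub_mul [BorelSpace E] (hg : Continuous g) (hcg : HasCompactSupport g)
    (hF : LocallyIntegrable F μ) (x : E) : Integrable (fun y => g (x - y) * F y) μ := by
  simpa [mul_comm] using (hcg.convolutionExists_right (mul ℝ ℝ) hF hg x).integrable

theorem abs_mollify_le [ProperSpace E] [IsFiniteMeasureOnCompacts μ] {x : E} {a b ρ : ℝ}
    (hg : ∀ z, |g z| ≤ a) (hgs : support g ⊆ closedBall 0 ρ)
    (hF : ∀ y ∈ closedBall x ρ, |F y| ≤ b) :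
    |mollify μ g F x| ≤ a * b * μ.real (closedBall x ρ) := by
  have hvan : ∀ y ∉ closedBall x ρ, g (x - y) * F y = 0 := fun y hy => by
    have hgy : g (x - y) = 0 := notMem_support.1 fun hxy => hy <| by
      rw [mem_closedBall, dist_comm, dist_eq_norm]
      simpa using hgs hxy
    rw [hgy, zero_mul]
  rw [mollify, ← setIntegral_eq_integral_of_forall_compl_eq_zero hvan, ← Real.norm_eq_abs]
  refine norm_setIntegral_le_of_norm_le_const measure_closedBall_lt_top fun y hy => ?_
  rw [norm_mul]
  exact mul_le_mul (hg _) (hF y hy) (norm_nonneg _) ((abs_nonneg _).trans (hg 0))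

variable [NormedSpace ℝ E] [BorelSpace E]

theorem hasFDerivAt_mollify [SFinite μ] [μ.IsAddLeftInvariant] (hη : ContDiff ℝ 1 η)
    (hcη : HasCompactSupport η) (hF : LocallyIntegrable F μ) (x : E) :
    HasFDerivAt (mollify μ η F) ((F ⋆[(mul ℝ ℝ).precompR E, μ] fderiv ℝ η) x) x := by
  rw [mollify_eq_convolution]
  exact hcη.hasFDerivAt_convolution_right _ hF hη x

theorem fderiv_mollify_apply [SFinite μ] [μ.IsAddLeftInvariant] (hη : ContDiff ℝ 1 η)
    (hcη : HasCompactSupport η) (hF : LocallyIntegrable F μ) (x h : E) :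
    fderiv ℝ (mollify μ η F) x h = ∫ y, fderiv ℝ η (x - y) h * F y ∂μ := by
  rw [(hasFDerivAt_mollify hη hcη hF x).fderiv, convolution_def,
    integral_apply ((hcη.fderiv ℝ).convolutionExists_right _ hF
      (hη.continuous_fderiv one_ne_zero) x).integrable]
  simp [mul_comm]

end Mollify

section TaylorRemainder

variable {E : Type*} [NormedAddCommGroup E] [NormedSpace ℝ E] {η : E → ℝ}

noncomputable def taylorRemainder (η : E → ℝ) (h z : E) : ℝ :=
  η (z + h) - η z - fderiv ℝ η z h

theorem continuous_taylorRemainder (hη : ContDiff ℝ 1 η) (h : E) :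
    Continuous (taylorRemainder η h) :=
  ((hη.continuous.comp (continuous_add_const h)).sub hη.continuous).sub
    ((hη.continuous_fderiv one_ne_zero).clm_apply continuous_const)

theorem support_taylorRemainder_subset {R : ℝ} (hR : tsupport η ⊆ closedBall 0 R) (h : E) :
    support (taylorRemainder η h) ⊆ closedBall 0 (R + ‖h‖) := by
  intro z hz
  rw [mem_closedBall, dist_zero_right]
  by_contra! hzR
  have hout : ∀ w, R < ‖w‖ → w ∉ tsupport η := fun w hw hmem =>
    hw.not_ge (by simpa using hR hmem)
  have hzh : z + h ∉ tsupport η := hout _ (by linarith [norm_sub_le_norm_add z h])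
  have hz' : z ∉ tsupport η := hout _ (by linarith [norm_nonneg h])
  have hDz : fderiv ℝ η z = 0 := notMem_support.1 fun hmem => hz' (support_fderiv_subset ℝ hmem)
  exact hz (by simp [taylorRemainder, image_eq_zero_of_notMem_tsupport hzh,
    image_eq_zero_of_notMem_tsupport hz', hDz])

theorem HasCompactSupport.taylorRemainder (hcη : HasCompactSupport η) (h : E) :
    HasCompactSupport (taylorRemainder η h) :=
  ((hcη.comp_homeomorph (Homeomorph.addRight h)).sub hcη).sub (hcη.fderiv_apply ℝ h)

theorem exists_abs_taylorRemainder_le (hη : ContDiff ℝ 1 η) (hcη : HasCompactSupport η)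
    {ε : ℝ} (hε : 0 < ε) : ∃ δ > 0, ∀ h z : E, ‖h‖ ≤ δ → |taylorRemainder η h z| ≤ ε * ‖h‖ := by
  obtain ⟨δ, hδ, hUC⟩ := Metric.uniformContinuous_iff.1
    ((hcη.fderiv ℝ).uniformContinuous_of_continuous (hη.continuous_fderiv one_ne_zero)) ε hε
  refine ⟨δ / 2, by positivity, fun h z hh => ?_⟩
  have hmvt := (convex_closedBall z ‖h‖).norm_image_sub_le_of_norm_fderiv_le'
    (fun w _ => (hη.differentiable one_ne_zero) w) (φ := fderiv ℝ η z) (C := ε)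
    (fun w hw => by
      rw [← dist_eq_norm]
      exact (hUC ((mem_closedBall.1 hw).trans_lt (by linarith))).le)
    (x := z) (y := z + h) (mem_closedBall_self (norm_nonneg h)) (by simp [dist_eq_norm])
  simpa [taylorRemainder] using hmvt

variable [MeasurableSpace E] [BorelSpace E] [FiniteDimensional ℝ E] {μ : Measure E}
  [μ.IsAddHaarMeasure]

theorem integral_fderiv_apply_eq_zero (hη : ContDiff ℝ 1 η) (hcη : HasCompactSupport η) (v : E) :
    ∫ z, fderiv ℝ η z v ∂μ = 0 := by
  have hibp := integral_mul_fderiv_eq_neg_fderiv_mul_of_integrable (μ := μ)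
    (f := fun _ => (1 : ℝ)) (g := η) (v := v) (by simp)
    (by simpa using ((hη.continuous_fderiv one_ne_zero).clm_apply continuous_const)
      |>.integrable_of_hasCompactSupport (hcη.fderiv_apply ℝ v))
    (by simpa using hη.continuous.integrable_of_hasCompactSupport hcη)
    (fun _ _ => differentiableAt_const _) (fun z _ => (hη.differentiable one_ne_zero) z)
  simpa using hibp

theorem integral_taylorRemainder (hη : ContDiff ℝ 1 η) (hcη : HasCompactSupport η) (h : E) :
    ∫ z, taylorRemainder η h z ∂μ = 0 := by
  have hshift : Integrable (fun z => η (z + h)) μ :=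
    (hη.continuous.comp (continuous_add_const h)).integrable_of_hasCompactSupport
      (hcη.comp_homeomorph (Homeomorph.addRight h))
  have hint := hη.continuous.integrable_of_hasCompactSupport (μ := μ) hcη
  have hderiv : Integrable (fun z => fderiv ℝ η z h) μ :=
    ((hη.continuous_fderiv one_ne_zero).clm_apply continuous_const).integrable_of_hasCompactSupport
      (hcη.fderiv_apply ℝ h)
  simp only [taylorRemainder]
  rw [integral_sub (f := fun z => η (z + h) - η z) (hshift.sub hint) hderiv,
    integral_sub hshift hint, integral_add_right_eq_self, integral_fderiv_apply_eq_zero hη hcη,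
    sub_self, sub_zero]

theorem mollify_add_sub_sub_fderiv (hη : ContDiff ℝ 1 η) (hcη : HasCompactSupport η) {F : E → ℝ}
    (hF : LocallyIntegrable F μ) (x h : E) :
    mollify μ η F (x + h) - mollify μ η F x - fderiv ℝ (mollify μ η F) x h =
      mollify μ (taylorRemainder η h) F x := by
  have hshift : Integrable (fun y => η (x + h - y) * F y) μ := by
    simpa [sub_add_eq_add_sub] using integrable_comp_sub_mul
      (hη.continuous.comp (continuous_add_const h)) (hcη.comp_homeomorph (Homeomorph.addRight h))
      hF x
  have hderiv := integrable_comp_sub_mul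
    ((hη.continuous_fderiv one_ne_zero).clm_apply continuous_const) (hcη.fderiv_apply ℝ h) hF x
  rw [fderiv_mollify_apply hη hcη hF, mollify, mollify, mollify,
    ← integral_sub hshift (integrable_comp_sub_mul hη.continuous hcη hF x), ← integral_sub _ hderiv]
  · congr 1 with y
    simp only [taylorRemainder, sub_add_eq_add_sub]
    ring
  · exact hshift.sub (integrable_comp_sub_mul hη.continuous hcη hF x)

theorem mollify_sub_const {g F : E → ℝ} (hg : Continuous g) (hcg : HasCompactSupport g)
    (hg0 : ∫ z, g z ∂μ = 0) (hF : LocallyIntegrable F μ) (x : E) :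
    mollify μ g F x = mollify μ g (fun y => F y - F x) x := by
  have hg1 : Integrable (fun y => g (x - y)) μ :=
    (hg.integrable_of_hasCompactSupport hcg).comp_sub_left x
  simp only [mollify, mul_sub]
  rw [integral_sub (integrable_comp_sub_mul hg hcg hF x) (hg1.mul_const _), integral_mul_const,
    integral_sub_left_eq_self, hg0, zero_mul, sub_zero]

theorem exists_abs_mollify_add_sub_sub_fderiv_le (hη : ContDiff ℝ 1 η)
    (hcη : HasCompactSupport η) {ε : ℝ} (hε : 0 < ε) :
    ∃ δ > 0, ∀ (K : ℝ≥0) (F : E → ℝ), LipschitzWith K F → ∀ x h : E, ‖h‖ ≤ δ →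
      |mollify μ η F (x + h) - mollify μ η F x - fderiv ℝ (mollify μ η F) x h| ≤ ε * K * ‖h‖ := by
  obtain ⟨R, hR0, hR⟩ := hcη.isCompact.isBounded.subset_closedBall_lt 0 0
  set V := μ.real (closedBall (0 : E) (R + 1))
  obtain ⟨δ, hδ, hδη⟩ := exists_abs_taylorRemainder_le hη hcη
    (ε := ε / ((R + 1) * V + 1)) (by positivity)
  refine ⟨min δ 1, by positivity, fun K F hF x h hh => ?_⟩
  have hF_loc := hF.continuous.locallyIntegrable (μ := μ)
  rw [mollify_add_sub_sub_fderiv hη hcη hF_loc, mollify_sub_const (continuous_taylorRemainder hη h)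
    (hcη.taylorRemainder h) (integral_taylorRemainder hη hcη h) hF_loc]
  have hbound := abs_mollify_le (μ := μ) (x := x) (F := fun y => F y - F x) (ρ := R + 1)
    (b := K * (R + 1)) (hδη h · (hh.trans (min_le_left _ _)))
    ((support_taylorRemainder_subset hR h).trans
      (closedBall_subset_closedBall (by linarith [hh.trans (min_le_right _ _)])))
    (fun y hy => by
      rw [← Real.dist_eq]
      exact (hF.dist_le_mul y x).trans (by gcongr; exact hy))
  rw [Measure.real, Measure.addHaar_closedBall_center, ← Measure.real] at hbound
  have hV : 0 ≤ V := measureReal_nonneg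
  calc _ ≤ _ := hbound
    _ = ε * K * ‖h‖ * ((R + 1) * V / ((R + 1) * V + 1)) := by field_simp; ring
    _ ≤ ε * K * ‖h‖ := mul_le_of_le_one_right (by positivity)
          (div_le_one_of_le₀ (by linarith) (by positivity))

end TaylorRemainder

theorem exists_lipschitzWith_eqOn_of_abs_sub_le {E : Type*} [SeminormedAddCommGroup E]
    {p : E → ℝ} {C L : ℝ} (hpC : ∀ x, p x ≤ C * ‖x‖) (hL : 0 ≤ L) {M : Set E} {f : E → ℝ}
    (hf : ∀ a ∈ M, ∀ b ∈ M, |f a - f b| ≤ L * p (a - b)) :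
    ∃ F : E → ℝ, LipschitzWith (L * C).toNNReal F ∧ EqOn f F M := by
  refine LipschitzOnWith.extend_real (LipschitzOnWith.of_dist_le_mul fun a ha b hb => ?_)
  calc dist (f a) (f b) = |f a - f b| := Real.dist_eq _ _
    _ ≤ L * (C * ‖a - b‖) := (hf a ha b hb).trans (mul_le_mul_of_nonneg_left (hpC _) hL)
    _ ≤ (L * C).toNNReal * dist a b := by
      rw [dist_eq_norm, ← mul_assoc]
      exact mul_le_mul_of_nonneg_right (Real.le_coe_toNNReal _) (norm_nonneg _)

theorem statement13_general {N : ℕ}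
    (nn : EuclideanSpace ℝ (Fin N) → ℝ)
    (nn_add : ∀ x y, nn (x + y) ≤ nn x + nn y)
    (nn_smul : ∀ (a : ℝ) (x : EuclideanSpace ℝ (Fin N)), nn (a • x) = |a| * nn x)
    (nn_eq_zero : ∀ x, nn x = 0 ↔ x = 0)
    (M : Set (EuclideanSpace ℝ (Fin N)))
    (r : ℝ)
    (η : EuclideanSpace ℝ (Fin N) → ℝ)
    (hηC1 : ContDiff ℝ 1 η)
    (hηcpt : HasCompactSupport η)
    (hηsupp : tsupport η ⊆ Metric.closedBall 0 r)
    (Mr : Set (EuclideanSpace ℝ (Fin N)))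
    (hMr : Mr = {z : EuclideanSpace ℝ (Fin N) | r < Metric.infDist z Mᶜ}) :
    (∀ (f : EuclideanSpace ℝ (Fin N) → ℝ) (L : ℝ), 0 ≤ L →
      (∀ a ∈ M, ∀ b ∈ M, |f a - f b| ≤ L * nn (a - b)) →
      ∀ x ∈ Mr, DifferentiableAt ℝ (fun x' => ∫ y, η (x' - y) * f y) x) ∧
    (∀ ε : ℝ, 0 < ε → ∃ δ : ℝ, 0 < δ ∧
      ∀ (f : EuclideanSpace ℝ (Fin N) → ℝ) (L : ℝ), 0 ≤ L →
        (∀ a ∈ M, ∀ b ∈ M, |f a - f b| ≤ L * nn (a - b)) →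
        ∀ x ∈ Mr, ∀ h : EuclideanSpace ℝ (Fin N), nn h ≤ δ → x + h ∈ Mr →
          |(∫ y, η (x + h - y) * f y) - (∫ y, η (x - y) * f y) -
              fderiv ℝ (fun x' => ∫ y, η (x' - y) * f y) x h|
            ≤ ε * L * nn h) := by
  let p : Seminorm ℝ (EuclideanSpace ℝ (Fin N)) := Seminorm.of nn nn_add (by simpa using nn_smul)
  obtain ⟨C, hC, hpC⟩ := p.exists_le_mul_norm
  obtain ⟨c, hc, hcp⟩ := p.exists_mul_norm_le fun x => (nn_eq_zero x).1
  subst hMr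
  have hext : ∀ (f : EuclideanSpace ℝ (Fin N) → ℝ) (L : ℝ), 0 ≤ L →
      (∀ a ∈ M, ∀ b ∈ M, |f a - f b| ≤ L * nn (a - b)) → ∃ F, LipschitzWith (L * C).toNNReal F ∧
        ∀ x, r < infDist x Mᶜ → mollify volume η f =ᶠ[𝓝 x] mollify volume η F := by
    intro f L hL hf
    obtain ⟨F, hF, hfF⟩ := exists_lipschitzWith_eqOn_of_abs_sub_le (p := p) hpC hL hf
    refine ⟨F, hF, fun x hx => ?_⟩
    filter_upwards [(isOpen_lt continuous_const (continuous_infDist_pt Mᶜ)).mem_nhds hx] with x' hx'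
    exact mollify_congr hηsupp <|
      hfF.mono (disjoint_compl_right_iff_subset.1 (disjoint_closedBall_of_lt_infDist hx'))
  refine ⟨fun f L hL hf x hx => ?_, fun ε hε => ?_⟩
  · obtain ⟨F, hF, hfF⟩ := hext f L hL hf
    exact ((hasFDerivAt_mollify hηC1 hηcpt hF.continuous.locallyIntegrable x).congr_of_eventuallyEq
      (hfF x hx)).differentiableAt
  obtain ⟨δ, hδ, hδη⟩ := exists_abs_mollify_add_sub_sub_fderiv_le (μ := volume) hηC1 hηcpt
    (ε := ε * c / C) (by positivity)
  refine ⟨c * δ, by positivity, fun f L hL hf x hx h hh hxh => ?_⟩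
  obtain ⟨F, hF, hfF⟩ := hext f L hL hf
  have hhδ : ‖h‖ ≤ δ := le_of_mul_le_mul_left ((hcp h).trans hh) hc
  change |mollify volume η f (x + h) - mollify volume η f x - fderiv ℝ (mollify volume η f) x h| ≤ _
  rw [(hfF _ hxh).eq_of_nhds, (hfF x hx).eq_of_nhds, (hfF x hx).fderiv_eq]
  calc _ ≤ ε * c / C * (L * C).toNNReal * ‖h‖ := hδη _ F hF x h hhδ
    _ = ε * L * (c * ‖h‖) := by rw [Real.coe_toNNReal _ (by positivity)]; field_simp
    _ ≤ ε * L * nn h := by gcongr; exact hcp h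

/-- Differentiability of the mollification `f_r(x) = ∫ η(x-y) f(y) dy` on `M(r)`, with a
modulus of uniform differentiability independent of the Lipschitz function `f`. -/
theorem statement13 {N : ℕ} (hN : 1 ≤ N)
    (nn : EuclideanSpace ℝ (Fin N) → ℝ)
    (nn_add : ∀ x y, nn (x + y) ≤ nn x + nn y)
    (nn_smul : ∀ (a : ℝ) (x : EuclideanSpace ℝ (Fin N)), nn (a • x) = |a| * nn x)
    (nn_eq_zero : ∀ x, nn x = 0 ↔ x = 0)
    (M : Set (EuclideanSpace ℝ (Fin N))) (hM : Bornology.IsBounded M)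
    (r : ℝ) (hr : 0 < r)
    (η : EuclideanSpace ℝ (Fin N) → ℝ) (hη0 : ∀ x, 0 ≤ η x)
    (hηC1 : ContDiff ℝ 1 η)
    (hηcpt : HasCompactSupport η)
    (hηsupp : tsupport η ⊆ Metric.closedBall 0 r)
    (hηone : ∫ x, η x = 1)
    (Mr : Set (EuclideanSpace ℝ (Fin N)))
    (hMr : Mr = {z : EuclideanSpace ℝ (Fin N) | r < Metric.infDist z Mᶜ}) :
    (∀ (f : EuclideanSpace ℝ (Fin N) → ℝ) (L : ℝ), 0 ≤ L →
      (∀ a ∈ M, ∀ b ∈ M, |f a - f b| ≤ L * nn (a - b)) →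
      ∀ x ∈ Mr, DifferentiableAt ℝ (fun x' => ∫ y, η (x' - y) * f y) x) ∧
    (∀ ε : ℝ, 0 < ε → ∃ δ : ℝ, 0 < δ ∧
      ∀ (f : EuclideanSpace ℝ (Fin N) → ℝ) (L : ℝ), 0 ≤ L →
        (∀ a ∈ M, ∀ b ∈ M, |f a - f b| ≤ L * nn (a - b)) →
        ∀ x ∈ Mr, ∀ h : EuclideanSpace ℝ (Fin N), nn h ≤ δ → x + h ∈ Mr →
          |(∫ y, η (x + h - y) * f y) - (∫ y, η (x - y) * f y) -
              fderiv ℝ (fun x' => ∫ y, η (x' - y) * f y) x h|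
            ≤ ε * L * nn h) :=
  statement13_general nn nn_add nn_smul nn_eq_zero M r η hηC1 hηcpt hηsupp Mr hMr
end

section
/- Let N ≥ 1, let ‖·‖ be a norm on ℝ^N, and let K > 0 satisfy (1/K)‖y‖ ≤ ‖y‖₂ ≤ K‖y‖ and (1/K)‖y‖ ≤ ‖y‖₁ ≤ K‖y‖ for all y ∈ ℝ^N, where ‖·‖₁ and ‖·‖₂ are the ℓ¹ and Euclidean norms. Let ε > 0, let U ⊆ ℝ^N be open, and let f : U → ℝ be a differentiable Lipschitz function such that for some δ > 0: for every x ∈ U and every h ∈ ℝ^N with ‖h‖ ≤ K·δ and x + h ∈ U, |f(x + h) − f(x) − Df(x)[h]| ≤ ε‖h‖. Let w ∈ ℝ^N and let C be the hypercube with vertices v_γ = w + δγ, γ ∈ {0,1}^N, and suppose C ⊆ U. Then the interpolation function Λ(f,C) restricted to C is Lipschitz with Lip(Λ(f,C)|_C) ≤ K²·ε + Lip(f). -/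
/-
The interpolation `Λ(f,C)` is multilinear in the normalized coordinates `(x_i - w_i)/δ`, so its
derivative in a direction `u` is a convex combination, with the interpolation weights, of the
discrete slopes `∑ₖ (uₖ/δ) (f(v') - f(v))` along the edges of the cube leaving a vertex `v`.
At a vertex, uniform differentiability gives `f(v + hₖ) - f(v) = Df(v) hₖ + O(εδ‖eₖ‖)` along
each edge `hₖ = ±δ eₖ`; the linear parts add up to `Df(v) u`, bounded by `Lip(f) ‖u‖`, and the
errors add up to at most `ε K ‖u‖₁ ≤ K² ε ‖u‖`. The mean value inequality concludes.
-/

/-- The coordinatewise affine interpolation `Λ(f,C)` of `f` on the hypercube with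
vertices `v_γ = w + δγ`, `γ ∈ {0,1}^N`. -/
noncomputable def interpLam {N : ℕ} (w : Fin N → ℝ) (δ : ℝ) (f : (Fin N → ℝ) → ℝ)
    (x : Fin N → ℝ) : ℝ :=
  ∑ γ : Fin N → Bool,
    (∏ i, if γ i then (x i - w i) / δ else 1 - (x i - w i) / δ) *
      f (fun i => w i + if γ i then δ else 0)

open Finset

namespace CubeInterp

variable {N : ℕ} (w : Fin N → ℝ) (δ : ℝ)

def cube : Set (Fin N → ℝ) := {x | ∀ i, x i ∈ Set.Icc (w i) (w i + δ)}

noncomputable def weight (z : Fin N → ℝ) (i : Fin N) (b : Bool) : ℝ :=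
  if b then (z i - w i) / δ else 1 - (z i - w i) / δ

def vertex (γ : Fin N → Bool) : Fin N → ℝ := fun i => w i + if γ i then δ else 0

/-- `edgeSign (γ k) * δ` is the `k`-th coordinate of the edge leaving the vertex `γ` along `eₖ`. -/
def edgeSign (b : Bool) : ℝ := if b then -1 else 1

def flipAt (k : Fin N) (γ : Fin N → Bool) : Fin N → Bool := Function.update γ k (!γ k)

noncomputable def vertexSlope (f : (Fin N → ℝ) → ℝ) (u : Fin N → ℝ) (γ : Fin N → Bool) : ℝ :=
  ∑ k, u k / δ * edgeSign (γ k) * (f (vertex w δ (flipAt k γ)) - f (vertex w δ γ))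

lemma convex_cube : Convex ℝ (cube w δ) :=
  fun _ hx _ hy _ _ ha hb hab i => convex_Icc _ _ (hx i) (hy i) ha hb hab

variable {w δ}

lemma vertex_mem_cube (hδ : 0 ≤ δ) (γ : Fin N → Bool) : vertex w δ γ ∈ cube w δ := by
  intro i
  cases h : γ i <;> simp [vertex, h, hδ]

lemma weight_add_weight_not (z : Fin N → ℝ) (i : Fin N) (b : Bool) :
    weight w δ z i b + weight w δ z i (!b) = 1 := by
  cases b <;> simp [weight]

lemma sum_prod_weight (z : Fin N → ℝ) : ∑ γ : Fin N → Bool, ∏ i, weight w δ z i (γ i) = 1 := by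
  rw [← Fintype.prod_sum]
  exact prod_eq_one fun i _ => by simpa [add_comm] using weight_add_weight_not z i false

lemma prod_weight_nonneg (hδ : 0 < δ) {z : Fin N → ℝ} (hz : z ∈ cube w δ) (γ : Fin N → Bool) :
    0 ≤ ∏ i, weight w δ z i (γ i) := by
  refine prod_nonneg fun i _ => ?_
  have hzi := hz i
  cases γ i
  · simpa [weight, sub_nonneg, div_le_one hδ, add_comm] using hzi.2
  · simpa [weight] using div_nonneg (sub_nonneg.2 hzi.1) hδ.le

lemma edgeSign_not (b : Bool) : edgeSign (!b) = -edgeSign b := by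
  cases b <;> simp [edgeSign]

lemma abs_edgeSign (b : Bool) : |edgeSign b| = 1 := by
  cases b <;> simp [edgeSign]

lemma edgeSign_mul_self (b : Bool) : edgeSign b * edgeSign b = 1 := by
  cases b <;> simp [edgeSign]

lemma flipAt_involutive (k : Fin N) : Function.Involutive (flipAt k) := by
  intro γ
  simp [flipAt]

lemma vertex_flipAt (k : Fin N) (γ : Fin N → Bool) :
    vertex w δ (flipAt k γ) = vertex w δ γ + Pi.single k (edgeSign (γ k) * δ) := by
  funext i
  rcases eq_or_ne i k with rfl | h
  · cases h : γ i <;> simp [vertex, flipAt, edgeSign, h]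
  · simp [vertex, flipAt, h]

lemma sum_mul_sub_comp_of_involutive {ι R : Type*} [Fintype ι] [CommRing R] {e : ι → ι}
    (he : Function.Involutive e) (G F : ι → R) :
    ∑ i, G i * (F (e i) - F i) = ∑ i, (G (e i) - G i) * F i := by
  have hswap : ∑ i, G i * F (e i) = ∑ i, G (e i) * F i := by
    rw [← Equiv.sum_comp he.toPerm]
    simp [he _]
  simp only [mul_sub, sub_mul, sum_sub_distrib, hswap]

lemma prod_weight_flipAt_mul_sub (z : Fin N → ℝ) (k : Fin N) (γ : Fin N → Bool) :
    (∏ i, weight w δ z i (flipAt k γ i)) * edgeSign (flipAt k γ k)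
      - (∏ i, weight w δ z i (γ i)) * edgeSign (γ k)
      = -edgeSign (γ k) * ∏ j ∈ univ.erase k, weight w δ z j (γ j) := by
  have hflip : (fun i => weight w δ z i (flipAt k γ i))
      = Function.update (fun i => weight w δ z i (γ i)) k (weight w δ z k (!γ k)) := by
    funext i
    rcases eq_or_ne i k with rfl | h
    · simp [flipAt]
    · simp [flipAt, h]
  rw [hflip, prod_update_of_mem (mem_univ k), ← mul_prod_erase univ _ (mem_univ k),
    ← erase_eq]
  simp only [flipAt, Function.update_self, edgeSign_not]
  linear_combination (-edgeSign (γ k) * ∏ j ∈ univ.erase k, weight w δ z j (γ j))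
    * weight_add_weight_not z k (γ k)

lemma hasDerivAt_weight_line (y u : Fin N → ℝ) (i : Fin N) (b : Bool) (t : ℝ) :
    HasDerivAt (fun s : ℝ => weight w δ (y + s • u) i b) (-edgeSign b * (u i / δ)) t := by
  have h : HasDerivAt (fun s : ℝ => (y i + s * u i - w i) / δ) (u i / δ) t :=
    (((hasDerivAt_mul_const (u i)).const_add (y i)).sub_const (w i)).div_const δ
  cases b
  · simpa [weight, edgeSign] using h.const_sub 1
  · simpa [weight, edgeSign] using h

lemma hasDerivAt_interpLam_line (f : (Fin N → ℝ) → ℝ) (y u : Fin N → ℝ) (t : ℝ) :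
    HasDerivAt (fun s => interpLam w δ f (y + s • u))
      (∑ γ, (∏ i, weight w δ (y + t • u) i (γ i)) * vertexSlope w δ f u γ) t := by
  set z := y + t • u
  have hterm : ∀ γ : Fin N → Bool,
      HasDerivAt (fun s : ℝ => (∏ i, weight w δ (y + s • u) i (γ i)) * f (vertex w δ γ))
        ((∑ k, (∏ j ∈ univ.erase k, weight w δ z j (γ j)) * (-edgeSign (γ k) * (u k / δ)))
          * f (vertex w δ γ)) t := fun γ => by
    simpa using (HasDerivAt.finsetProd (u := univ) fun i _ =>
      hasDerivAt_weight_line y u i (γ i) t).mul_const (f (vertex w δ γ))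
  refine (HasDerivAt.fun_sum fun γ _ => hterm γ).congr_deriv ?_
  simp only [vertexSlope, mul_sum, sum_mul]
  rw [sum_comm]
  conv_rhs => rw [sum_comm]
  refine sum_congr rfl fun k _ => ?_
  -- summation by parts along the flip of coordinate `k`; the weights of `γ` and of its flip
  -- sum to the product of the other weights
  convert (sum_mul_sub_comp_of_involutive (flipAt_involutive k)
    (fun γ => (∏ i, weight w δ z i (γ i)) * edgeSign (γ k) * (u k / δ))
    (fun γ => f (vertex w δ γ))).symm using 1
  · refine sum_congr rfl fun γ _ => ?_
    linear_combination (-(u k / δ) * f (vertex w δ γ)) * prod_weight_flipAt_mul_sub z k γ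
  · exact sum_congr rfl fun γ _ => by ring

lemma abs_sum_prod_weight_mul_le (hδ : 0 < δ) {z : Fin N → ℝ} (hz : z ∈ cube w δ)
    {S : (Fin N → Bool) → ℝ} {M : ℝ} (hS : ∀ γ, |S γ| ≤ M) :
    |∑ γ, (∏ i, weight w δ z i (γ i)) * S γ| ≤ M :=
  abs_le.2 <| (convex_Icc (-M) M).sum_mem (fun γ _ => prod_weight_nonneg hδ hz γ)
    (sum_prod_weight z) fun γ _ => abs_le.1 (hS γ)

lemma abs_interpLam_sub_le (hδ : 0 < δ) {f : (Fin N → ℝ) → ℝ} {x y : Fin N → ℝ}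
    (hx : x ∈ cube w δ) (hy : y ∈ cube w δ) {M : ℝ}
    (hM : ∀ γ, |vertexSlope w δ f (x - y) γ| ≤ M) :
    |interpLam w δ f x - interpLam w δ f y| ≤ M := by
  have hseg : ∀ t ∈ Set.Icc (0 : ℝ) 1, y + t • (x - y) ∈ cube w δ := fun t ht =>
    (convex_cube w δ).add_smul_sub_mem hy hx ht
  simpa using norm_image_sub_le_of_norm_deriv_le_segment_01'
    (fun t _ => (hasDerivAt_interpLam_line f y (x - y) t).hasDerivWithinAt)
    fun t ht => abs_sum_prod_weight_mul_le hδ (hseg t (Set.Ico_subset_Icc_self ht)) hM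

lemma vertexSlope_eq_add (hδ : δ ≠ 0) (f : (Fin N → ℝ) → ℝ) (D : (Fin N → ℝ) →L[ℝ] ℝ)
    (u : Fin N → ℝ) (γ : Fin N → Bool) :
    vertexSlope w δ f u γ = D u + ∑ k, u k / δ * edgeSign (γ k) *
      (f (vertex w δ (flipAt k γ)) - f (vertex w δ γ) - D (Pi.single k (edgeSign (γ k) * δ))) := by
  have hD : ∀ k, u k / δ * edgeSign (γ k) * D (Pi.single k (edgeSign (γ k) * δ))
      = D (Pi.single k (u k)) := fun k => by
    rw [← smul_eq_mul, ← D.map_smul, ← Pi.single_smul', smul_eq_mul]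
    congr 2
    linear_combination u k / δ * δ * edgeSign_mul_self (γ k) + u k * (div_mul_cancel₀ 1 hδ)
  have hDu : D u = ∑ k, D (Pi.single k (u k)) := by rw [← map_sum, univ_sum_single]
  simp only [vertexSlope, mul_sub, sum_sub_distrib, hD, hDu]
  ring

lemma abs_vertexSlope_le (hδ : 0 < δ) (f : (Fin N → ℝ) → ℝ) (D : (Fin N → ℝ) →L[ℝ] ℝ)
    (u : Fin N → ℝ) (γ : Fin N → Bool) {K ε L r : ℝ} (hK : 0 ≤ K) (hε : 0 ≤ ε)
    (hDu : |D u| ≤ L * r) (hu : ∑ k, |u k| ≤ K * r)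
    (hrem : ∀ k, |f (vertex w δ (flipAt k γ)) - f (vertex w δ γ)
      - D (Pi.single k (edgeSign (γ k) * δ))| ≤ ε * (δ * K)) :
    |vertexSlope w δ f u γ| ≤ (K ^ 2 * ε + L) * r := by
  have hterm : ∀ k, |u k / δ * edgeSign (γ k) * (f (vertex w δ (flipAt k γ))
      - f (vertex w δ γ) - D (Pi.single k (edgeSign (γ k) * δ)))| ≤ ε * K * |u k| := fun k => by
    rw [abs_mul, abs_mul, abs_edgeSign, abs_div, abs_of_pos hδ, mul_one]
    calc |u k| / δ * _ ≤ |u k| / δ * (ε * (δ * K)) := by gcongr; exact hrem k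
      _ = ε * K * |u k| := by field_simp
  rw [vertexSlope_eq_add hδ.ne' f D]
  calc _ ≤ |D u| + ∑ k, ε * K * |u k| := by
        grw [abs_add_le, abs_sum_le_sum_abs, sum_le_sum fun k _ => hterm k]
    _ ≤ L * r + ε * K * (K * r) := by
        rw [← mul_sum]; gcongr
    _ = (K ^ 2 * ε + L) * r := by ring

end CubeInterp

open CubeInterp

lemma abs_fderiv_apply_le_of_lipschitzOn {E : Type*} [NormedAddCommGroup E] [NormedSpace ℝ E]
    {nn : E → ℝ} (nn_smul : ∀ (a : ℝ) (x : E), nn (a • x) = |a| * nn x)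
    (nn_nonneg : ∀ x, 0 ≤ nn x) {U : Set E} (hU : IsOpen U) {f : E → ℝ} {L : ℝ} (hL : 0 ≤ L)
    (hfLip : ∀ x ∈ U, ∀ y ∈ U, |f x - f y| ≤ L * nn (x - y)) {v : E} (hv : v ∈ U)
    (hf : DifferentiableAt ℝ f v) (q : E) : |fderiv ℝ f v q| ≤ L * nn q := by
  have hline : HasDerivAt (fun t : ℝ => v + t • q) q 0 := by
    simpa using ((hasDerivAt_id (0 : ℝ)).smul_const q).const_add v
  have hf' : HasDerivAt (fun t : ℝ => f (v + t • q)) (fderiv ℝ f v q) 0 :=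
    hf.hasFDerivAt.comp_hasDerivAt_of_eq 0 hline (by simp)
  have hnear : ∀ᶠ t in nhds (0 : ℝ), v + t • q ∈ U :=
    hline.continuousAt.preimage_mem_nhds (by simpa using hU.mem_nhds hv)
  simpa using hf'.le_of_lip' (mul_nonneg hL (nn_nonneg q)) <| hnear.mono fun t ht => by
    simpa [nn_smul, mul_comm, mul_left_comm] using hfLip _ ht v hv

theorem statement14_general {N : ℕ}
    (nn : (Fin N → ℝ) → ℝ)
    (nn_smul : ∀ (a : ℝ) (x : Fin N → ℝ), nn (a • x) = |a| * nn x)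
    (K : ℝ) (hK : 0 < K)
    (hK1low : ∀ y : Fin N → ℝ, (1 / K) * nn y ≤ ∑ i, |y i|)
    (hK1high : ∀ y : Fin N → ℝ, (∑ i, |y i|) ≤ K * nn y)
    (ε : ℝ) (hε : 0 < ε)
    (U : Set (Fin N → ℝ)) (hU : IsOpen U)
    (f : (Fin N → ℝ) → ℝ)
    (hfdiff : ∀ x ∈ U, DifferentiableAt ℝ f x)
    (L : ℝ) (hL : 0 ≤ L)
    (hfLip : ∀ x ∈ U, ∀ y ∈ U, |f x - f y| ≤ L * nn (x - y))
    (δ : ℝ) (hδ : 0 < δ)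
    (hunif : ∀ x ∈ U, ∀ h : Fin N → ℝ, nn h ≤ K * δ → x + h ∈ U →
      |f (x + h) - f x - fderiv ℝ f x h| ≤ ε * nn h)
    (w : Fin N → ℝ)
    (hCU : {x : Fin N → ℝ | ∀ i, x i ∈ Set.Icc (w i) (w i + δ)} ⊆ U) :
    ∀ x ∈ {x : Fin N → ℝ | ∀ i, x i ∈ Set.Icc (w i) (w i + δ)},
      ∀ y ∈ {x : Fin N → ℝ | ∀ i, x i ∈ Set.Icc (w i) (w i + δ)},
        |interpLam w δ f x - interpLam w δ f y| ≤ (K ^ 2 * ε + L) * nn (x - y) := by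
  have nn_nonneg : ∀ y, 0 ≤ nn y := fun y =>
    nonneg_of_mul_nonneg_right ((sum_nonneg fun i _ => abs_nonneg (y i)).trans (hK1high y)) hK
  have nn_single_le : ∀ k : Fin N, nn (Pi.single k 1) ≤ K := fun k => by
    have h := hK1low (Pi.single k 1)
    simp only [Pi.single_apply, apply_ite abs, abs_one, abs_zero, sum_ite_eq', mem_univ,
      if_true] at h
    rwa [one_div, inv_mul_le_iff₀ hK, mul_one] at h
  intro x hx y hy
  refine abs_interpLam_sub_le hδ hx hy fun γ => ?_
  have hvU : vertex w δ γ ∈ U := hCU (vertex_mem_cube hδ.le γ)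
  refine abs_vertexSlope_le hδ f (fderiv ℝ f (vertex w δ γ)) (x - y) γ hK.le hε.le
    (abs_fderiv_apply_le_of_lipschitzOn nn_smul nn_nonneg hU hL hfLip hvU (hfdiff _ hvU) _)
    (hK1high _) fun k => ?_
  have hstep : nn (Pi.single k (edgeSign (γ k) * δ)) = δ * nn (Pi.single k 1) := by
    rw [← mul_one (edgeSign (γ k) * δ), ← smul_eq_mul, Pi.single_smul', nn_smul, abs_mul,
      abs_edgeSign, abs_of_pos hδ, one_mul]
  have hflipU := hCU (vertex_mem_cube hδ.le (flipAt k γ))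
  rw [vertex_flipAt] at hflipU ⊢
  calc _ ≤ ε * nn (Pi.single k (edgeSign (γ k) * δ)) :=
        hunif _ hvU _ (by rw [hstep, mul_comm K]; gcongr; exact nn_single_le k) hflipU
    _ ≤ ε * (δ * K) := by rw [hstep]; gcongr; exact nn_single_le k

/-- Lipschitz estimate for the interpolation of a uniformly differentiable Lipschitz
function on a hypercube of edge length `δ`. -/
theorem statement14 {N : ℕ} (hN : 1 ≤ N)
    (nn : (Fin N → ℝ) → ℝ)
    (nn_add : ∀ x y, nn (x + y) ≤ nn x + nn y)
    (nn_smul : ∀ (a : ℝ) (x : Fin N → ℝ), nn (a • x) = |a| * nn x)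
    (nn_eq_zero : ∀ x, nn x = 0 ↔ x = 0)
    (K : ℝ) (hK : 0 < K)
    (hK2low : ∀ y : Fin N → ℝ, (1 / K) * nn y ≤ Real.sqrt (∑ i, (y i) ^ 2))
    (hK2high : ∀ y : Fin N → ℝ, Real.sqrt (∑ i, (y i) ^ 2) ≤ K * nn y)
    (hK1low : ∀ y : Fin N → ℝ, (1 / K) * nn y ≤ ∑ i, |y i|)
    (hK1high : ∀ y : Fin N → ℝ, (∑ i, |y i|) ≤ K * nn y)
    (ε : ℝ) (hε : 0 < ε)
    (U : Set (Fin N → ℝ)) (hU : IsOpen U)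
    (f : (Fin N → ℝ) → ℝ)
    (hfdiff : ∀ x ∈ U, DifferentiableAt ℝ f x)
    (L : ℝ) (hL : 0 ≤ L)
    (hfLip : ∀ x ∈ U, ∀ y ∈ U, |f x - f y| ≤ L * nn (x - y))
    (δ : ℝ) (hδ : 0 < δ)
    (hunif : ∀ x ∈ U, ∀ h : Fin N → ℝ, nn h ≤ K * δ → x + h ∈ U →
      |f (x + h) - f x - fderiv ℝ f x h| ≤ ε * nn h)
    (w : Fin N → ℝ)
    (hCU : {x : Fin N → ℝ | ∀ i, x i ∈ Set.Icc (w i) (w i + δ)} ⊆ U) :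
    ∀ x ∈ {x : Fin N → ℝ | ∀ i, x i ∈ Set.Icc (w i) (w i + δ)},
      ∀ y ∈ {x : Fin N → ℝ | ∀ i, x i ∈ Set.Icc (w i) (w i + δ)},
        |interpLam w δ f x - interpLam w δ f y| ≤ (K ^ 2 * ε + L) * nn (x - y) :=
  statement14_general nn nn_smul K hK hK1low hK1high ε hε U hU f hfdiff L hL hfLip δ hδ hunif w hCU
end

section
/- Let N ≥ 1, let ‖·‖ be a norm on ℝ^N, and let K > 0 satisfy ‖y‖ ≤ K‖y‖₂ for all y ∈ ℝ^N, where ‖·‖₂ is the Euclidean norm. Let U ⊆ ℝ^N be open, f : U → ℝ a Lipschitz function, w ∈ ℝ^N, δ > 0, and let C be the hypercube with vertices v_γ = w + δγ, γ ∈ {0,1}^N, with C ⊆ U. Then for every x ∈ C, |Λ(f,C)(x) − f(x)| ≤ √N·K·Lip(f)·δ. -/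
/-- Uniform approximation of a Lipschitz function by its coordinatewise affine
interpolation on a hypercube of edge length `δ`: `|Λ(f,C)(x) - f(x)| ≤ √N·K·Lip(f)·δ`. -/
theorem statement15 {N : ℕ} (hN : 1 ≤ N)
    (nn : (Fin N → ℝ) → ℝ)
    (nn_add : ∀ x y, nn (x + y) ≤ nn x + nn y)
    (nn_smul : ∀ (a : ℝ) (x : Fin N → ℝ), nn (a • x) = |a| * nn x)
    (nn_eq_zero : ∀ x, nn x = 0 ↔ x = 0)
    (K : ℝ) (hK : 0 < K)
    (hKnorm : ∀ y : Fin N → ℝ, nn y ≤ K * Real.sqrt (∑ i, (y i) ^ 2))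
    (U : Set (Fin N → ℝ)) (hU : IsOpen U)
    (f : (Fin N → ℝ) → ℝ)
    (L : ℝ) (hL : 0 ≤ L)
    (hfLip : ∀ x ∈ U, ∀ y ∈ U, |f x - f y| ≤ L * nn (x - y))
    (w : Fin N → ℝ) (δ : ℝ) (hδ : 0 < δ)
    (hCU : {x : Fin N → ℝ | ∀ i, x i ∈ Set.Icc (w i) (w i + δ)} ⊆ U) :
    ∀ x ∈ {x : Fin N → ℝ | ∀ i, x i ∈ Set.Icc (w i) (w i + δ)},
      |interpLam w δ f x - f x| ≤ Real.sqrt N * K * L * δ := by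
  intro x hx
  have hxU : x ∈ U := hCU hx
  set v : (Fin N → Bool) → (Fin N → ℝ) := fun γ i => w i + if γ i then δ else 0 with hv
  have hvC : ∀ γ, v γ ∈ {x : Fin N → ℝ | ∀ i, x i ∈ Set.Icc (w i) (w i + δ)} := by
    intro γ i
    by_cases h : γ i <;> simp [v, h, hδ.le]
  have hvU : ∀ γ, v γ ∈ U := fun γ => hCU (hvC γ)
  set c : (Fin N → Bool) → ℝ :=
    fun γ => ∏ i, if γ i then (x i - w i) / δ else 1 - (x i - w i) / δ with hc
  have hs01 : ∀ i, 0 ≤ (x i - w i) / δ ∧ (x i - w i) / δ ≤ 1 := by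
    intro i
    obtain ⟨h1, h2⟩ := hx i
    exact ⟨div_nonneg (by linarith) hδ.le, (div_le_one hδ).2 (by linarith)⟩
  have hc0 : ∀ γ, 0 ≤ c γ := by
    intro γ
    apply Finset.prod_nonneg
    intro i _
    obtain ⟨h1, h2⟩ := hs01 i
    by_cases h : γ i <;> simp [h] <;> linarith
  have hcsum : ∑ γ : Fin N → Bool, c γ = 1 := by
    have h1 := Finset.prod_univ_sum (fun _ : Fin N => (Finset.univ : Finset Bool))
      (fun i b => if b then (x i - w i) / δ else 1 - (x i - w i) / δ)
    rw [Fintype.piFinset_univ] at h1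
    rw [hc, ← h1]
    have : ∀ i : Fin N,
        (∑ b : Bool, if b then (x i - w i) / δ else 1 - (x i - w i) / δ) = 1 := by
      intro i
      rw [Fintype.sum_bool]
      simp
    simp [this]
  have hdist : ∀ γ, Real.sqrt (∑ i, (v γ i - x i) ^ 2) ≤ Real.sqrt N * δ := by
    intro γ
    have h1 : (∑ i, (v γ i - x i) ^ 2) ≤ ∑ _i : Fin N, δ ^ 2 := by
      apply Finset.sum_le_sum
      intro i _
      obtain ⟨hx1, hx2⟩ := hx i
      have habs : |v γ i - x i| ≤ δ := by
        rw [abs_le]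
        by_cases h : γ i <;> simp [v, h] <;> constructor <;> linarith
      calc (v γ i - x i) ^ 2 = |v γ i - x i| ^ 2 := (sq_abs _).symm
        _ ≤ δ ^ 2 := pow_le_pow_left₀ (abs_nonneg _) habs 2
    calc Real.sqrt (∑ i, (v γ i - x i) ^ 2) ≤ Real.sqrt (N * δ ^ 2) := by
          apply Real.sqrt_le_sqrt
          simpa using h1
      _ = Real.sqrt N * δ := by
          rw [Real.sqrt_mul (Nat.cast_nonneg N), Real.sqrt_sq hδ.le]
  have hfb : ∀ γ, |f (v γ) - f x| ≤ Real.sqrt N * K * L * δ := by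
    intro γ
    have h1 := hfLip (v γ) (hvU γ) x hxU
    have h2 := hKnorm (v γ - x)
    have h3 : nn (v γ - x) ≤ K * (Real.sqrt N * δ) := by
      refine h2.trans ?_
      have h4 : Real.sqrt (∑ i, ((v γ - x) i) ^ 2) ≤ Real.sqrt N * δ := by
        simpa [Pi.sub_apply] using hdist γ
      exact mul_le_mul_of_nonneg_left h4 hK.le
    calc |f (v γ) - f x| ≤ L * nn (v γ - x) := h1
      _ ≤ L * (K * (Real.sqrt N * δ)) := mul_le_mul_of_nonneg_left h3 hL
      _ = Real.sqrt N * K * L * δ := by ring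
  have key : interpLam w δ f x - f x = ∑ γ : Fin N → Bool, c γ * (f (v γ) - f x) := by
    have h1 : ∑ γ : Fin N → Bool, c γ * (f (v γ) - f x)
        = (∑ γ : Fin N → Bool, c γ * f (v γ)) - (∑ γ : Fin N → Bool, c γ) * f x := by
      rw [Finset.sum_mul, ← Finset.sum_sub_distrib]
      congr 1
      ext γ
      ring
    rw [h1, hcsum, one_mul]
    rfl
  rw [key]
  calc |∑ γ : Fin N → Bool, c γ * (f (v γ) - f x)|
      ≤ ∑ γ : Fin N → Bool, |c γ * (f (v γ) - f x)| := Finset.abs_sum_le_sum_abs _ _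
    _ ≤ ∑ γ : Fin N → Bool, c γ * (Real.sqrt N * K * L * δ) := by
        apply Finset.sum_le_sum
        intro γ _
        rw [abs_mul, abs_of_nonneg (hc0 γ)]
        exact mul_le_mul_of_nonneg_left (hfb γ) (hc0 γ)
    _ = (∑ γ : Fin N → Bool, c γ) * (Real.sqrt N * K * L * δ) := (Finset.sum_mul _ _ _).symm
    _ = Real.sqrt N * K * L * δ := by rw [hcsum, one_mul]
end

section
/- Let N ≥ 1 and equip ℝ^N with the ℓ¹-norm ‖·‖₁. Let w ∈ ℝ^N, δ > 0, and let C be the hypercube with vertices v_γ = w + δγ, γ ∈ {0,1}^N. Let f be a real-valued Lipschitz function (with respect to ‖·‖₁) defined on a set containing C. Then the interpolation function Λ(f,C) restricted to C is Lipschitz with Lip₁(Λ(f,C)|_C) ≤ Lip₁(f), where Lipschitz constants are taken with respect to ‖·‖₁. -/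
open Finset

section Multiaffine

variable {ι : Type*} [Fintype ι]

noncomputable def cubeWeight (s : ι → ℝ) (γ : ι → Bool) : ℝ :=
  ∏ i, if γ i then s i else 1 - s i

lemma cubeWeight_nonneg {s : ι → ℝ} (hs : ∀ i, s i ∈ Set.Icc 0 1) (γ : ι → Bool) :
    0 ≤ cubeWeight s γ :=
  prod_nonneg fun i _ => by
    cases γ i <;> simp [(hs i).1, (hs i).2]

variable [DecidableEq ι]

noncomputable def multiaffineExt (g : (ι → Bool) → ℝ) (s : ι → ℝ) : ℝ :=
  ∑ γ, cubeWeight s γ * g γ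

lemma sum_cubeWeight (s : ι → ℝ) : ∑ γ, cubeWeight s γ = 1 := by
  rw [show (∑ γ, cubeWeight s γ) = ∏ i, ∑ b : Bool, if b then s i else 1 - s i from
    (Fintype.prod_sum fun i (b : Bool) => if b then s i else 1 - s i).symm]
  simp

lemma abs_multiaffineExt_le {g : (ι → Bool) → ℝ} {K : ℝ} (hg : ∀ γ, |g γ| ≤ K)
    {s : ι → ℝ} (hs : ∀ i, s i ∈ Set.Icc 0 1) : |multiaffineExt g s| ≤ K := by
  calc |multiaffineExt g s| ≤ ∑ γ, cubeWeight s γ * |g γ| := by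
        refine (abs_sum_le_sum_abs _ _).trans_eq (sum_congr rfl fun γ _ => ?_)
        rw [abs_mul, abs_of_nonneg (cubeWeight_nonneg hs γ)]
    _ ≤ ∑ γ, cubeWeight s γ * K :=
        sum_le_sum fun γ _ => mul_le_mul_of_nonneg_left (hg γ) (cubeWeight_nonneg hs γ)
    _ = K := by rw [← sum_mul, sum_cubeWeight, one_mul]

lemma multiaffineExt_sub (g h : (ι → Bool) → ℝ) (s : ι → ℝ) :
    multiaffineExt g s - multiaffineExt h s = multiaffineExt (g - h) s := by
  simp only [multiaffineExt, ← sum_sub_distrib, Pi.sub_apply, mul_sub]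

lemma multiaffineExt_fin_succ {n : ℕ} (g : (Fin (n + 1) → Bool) → ℝ) (s : Fin (n + 1) → ℝ) :
    multiaffineExt g s =
      (1 - s 0) * multiaffineExt (fun γ => g (Fin.cons false γ)) (Fin.tail s) +
        s 0 * multiaffineExt (fun γ => g (Fin.cons true γ)) (Fin.tail s) := by
  rw [multiaffineExt, ← (Fin.consEquiv fun _ => Bool).sum_comp, Fintype.sum_prod_type,
    Fintype.sum_bool]
  simp [multiaffineExt, cubeWeight, Fin.prod_univ_succ, Fin.consEquiv, mul_sum, Fin.tail, mul_assoc,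
    add_comm]

theorem abs_multiaffineExt_sub_le {n : ℕ} {g : (Fin n → Bool) → ℝ} {K : ℝ}
    (hg : ∀ γ j, |g (Function.update γ j true) - g (Function.update γ j false)| ≤ K)
    {s t : Fin n → ℝ} (hs : ∀ i, s i ∈ Set.Icc 0 1) (ht : ∀ i, t i ∈ Set.Icc 0 1) :
    |multiaffineExt g s - multiaffineExt g t| ≤ K * ∑ i, |s i - t i| := by
  induction n with
  | zero => simp [multiaffineExt, Subsingleton.elim s t]
  | succ n ih =>
    rw [multiaffineExt_fin_succ, multiaffineExt_fin_succ]
    set g₀ : (Fin n → Bool) → ℝ := fun γ => g (Fin.cons false γ)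
    set g₁ : (Fin n → Bool) → ℝ := fun γ => g (Fin.cons true γ)
    have hg₀ : ∀ γ j, |g₀ (Function.update γ j true) - g₀ (Function.update γ j false)| ≤ K :=
      fun γ j => by simpa only [g₀, Fin.cons_update] using hg (Fin.cons false γ) j.succ
    have hg₁ : ∀ γ j, |g₁ (Function.update γ j true) - g₁ (Function.update γ j false)| ≤ K :=
      fun γ j => by simpa only [g₁, Fin.cons_update] using hg (Fin.cons true γ) j.succ
    have hs' : ∀ i, Fin.tail s i ∈ Set.Icc 0 1 := fun i => hs i.succ
    have ht' : ∀ i, Fin.tail t i ∈ Set.Icc 0 1 := fun i => ht i.succ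
    have hjump : |multiaffineExt g₁ (Fin.tail t) - multiaffineExt g₀ (Fin.tail t)| ≤ K := by
      rw [multiaffineExt_sub]
      refine abs_multiaffineExt_le (fun γ => ?_) ht'
      simpa only [Pi.sub_apply, g₀, g₁, Fin.update_cons_zero] using hg (Fin.cons false γ) 0
    have hsum : ∑ i, |s i - t i| = |s 0 - t 0| + ∑ i, |Fin.tail s i - Fin.tail t i| :=
      Fin.sum_univ_succ _
    rw [hsum]
    calc _ = |(1 - s 0) * (multiaffineExt g₀ (Fin.tail s) - multiaffineExt g₀ (Fin.tail t))
            + s 0 * (multiaffineExt g₁ (Fin.tail s) - multiaffineExt g₁ (Fin.tail t))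
            + (s 0 - t 0) * (multiaffineExt g₁ (Fin.tail t) - multiaffineExt g₀ (Fin.tail t))| := by
          congr 1; ring
      _ ≤ (1 - s 0) * (K * ∑ i, |Fin.tail s i - Fin.tail t i|)
            + s 0 * (K * ∑ i, |Fin.tail s i - Fin.tail t i|) + |s 0 - t 0| * K := by
          obtain ⟨h0, h1⟩ := hs 0
          refine (abs_add_three _ _ _).trans (add_le_add_three ?_ ?_ ?_) <;>
            rw [abs_mul]
          · rw [abs_of_nonneg (sub_nonneg.2 h1)]
            exact mul_le_mul_of_nonneg_left (ih hg₀ hs' ht') (sub_nonneg.2 h1)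
          · rw [abs_of_nonneg h0]
            exact mul_le_mul_of_nonneg_left (ih hg₁ hs' ht') h0
          · exact mul_le_mul_of_nonneg_left hjump (abs_nonneg _)
      _ = K * (|s 0 - t 0| + ∑ i, |Fin.tail s i - Fin.tail t i|) := by ring

end Multiaffine

def cubeVertex {N : ℕ} (w : Fin N → ℝ) (δ : ℝ) (γ : Fin N → Bool) : Fin N → ℝ :=
  fun i => w i + if γ i then δ else 0

lemma interpLam_eq_multiaffineExt {N : ℕ} (w : Fin N → ℝ) (δ : ℝ) (f : (Fin N → ℝ) → ℝ)
    (x : Fin N → ℝ) :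
    interpLam w δ f x =
      multiaffineExt (fun γ => f (cubeVertex w δ γ)) (fun i => (x i - w i) / δ) :=
  rfl

lemma cubeVertex_mem {N : ℕ} (w : Fin N → ℝ) {δ : ℝ} (hδ : 0 ≤ δ) (γ : Fin N → Bool) (i : Fin N) :
    cubeVertex w δ γ i ∈ Set.Icc (w i) (w i + δ) := by
  by_cases h : γ i <;> simp [cubeVertex, h, hδ]

lemma sum_abs_cubeVertex_update_sub {N : ℕ} (w : Fin N → ℝ) {δ : ℝ} (hδ : 0 ≤ δ)
    (γ : Fin N → Bool) (j : Fin N) :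
    ∑ i, |cubeVertex w δ (Function.update γ j true) i -
      cubeVertex w δ (Function.update γ j false) i| = δ := by
  rw [sum_eq_single j (fun i _ hij => by simp [cubeVertex, hij]) (by simp)]
  simp [cubeVertex, abs_of_nonneg hδ]

lemma sub_div_mem_Icc_zero_one {a b δ : ℝ} (hδ : 0 < δ) (h : b ∈ Set.Icc a (a + δ)) :
    (b - a) / δ ∈ Set.Icc 0 1 := by
  rw [Set.mem_Icc, div_le_one hδ]
  exact ⟨div_nonneg (by linarith [h.1]) hδ.le, by linarith [h.2]⟩

theorem statement16_general {N : ℕ}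
    (w : Fin N → ℝ) (δ : ℝ) (hδ : 0 < δ)
    (D : Set (Fin N → ℝ))
    (hCD : {x : Fin N → ℝ | ∀ i, x i ∈ Set.Icc (w i) (w i + δ)} ⊆ D)
    (f : (Fin N → ℝ) → ℝ)
    (L : ℝ)
    (hfLip : ∀ x ∈ D, ∀ y ∈ D, |f x - f y| ≤ L * ∑ i, |x i - y i|) :
    ∀ x ∈ {x : Fin N → ℝ | ∀ i, x i ∈ Set.Icc (w i) (w i + δ)},
      ∀ y ∈ {x : Fin N → ℝ | ∀ i, x i ∈ Set.Icc (w i) (w i + δ)},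
        |interpLam w δ f x - interpLam w δ f y| ≤ L * ∑ i, |x i - y i| := by
  intro x hx y hy
  have hvertex : ∀ γ j, |f (cubeVertex w δ (Function.update γ j true)) -
      f (cubeVertex w δ (Function.update γ j false))| ≤ L * δ := fun γ j =>
    (hfLip _ (hCD (cubeVertex_mem w hδ.le _)) _ (hCD (cubeVertex_mem w hδ.le _))).trans_eq
      (by rw [sum_abs_cubeVertex_update_sub w hδ.le])
  rw [interpLam_eq_multiaffineExt, interpLam_eq_multiaffineExt]
  calc _ ≤ L * δ * ∑ i, |(x i - w i) / δ - (y i - w i) / δ| :=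
        abs_multiaffineExt_sub_le hvertex (fun i => sub_div_mem_Icc_zero_one hδ (hx i))
          (fun i => sub_div_mem_Icc_zero_one hδ (hy i))
    _ = L * ∑ i, |x i - y i| := by
        simp only [← sub_div, sub_sub_sub_cancel_right, abs_div, abs_of_pos hδ, ← sum_div]
        field_simp

/-- With respect to the `ℓ¹`-norm on `ℝ^N`, the coordinatewise affine interpolation
does not increase the Lipschitz constant: `Lip₁(Λ(f,C)|_C) ≤ Lip₁(f)`. -/
theorem statement16 {N : ℕ} (hN : 1 ≤ N)
    (w : Fin N → ℝ) (δ : ℝ) (hδ : 0 < δ)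
    (D : Set (Fin N → ℝ))
    (hCD : {x : Fin N → ℝ | ∀ i, x i ∈ Set.Icc (w i) (w i + δ)} ⊆ D)
    (f : (Fin N → ℝ) → ℝ)
    (L : ℝ) (hL : 0 ≤ L)
    (hfLip : ∀ x ∈ D, ∀ y ∈ D, |f x - f y| ≤ L * ∑ i, |x i - y i|) :
    ∀ x ∈ {x : Fin N → ℝ | ∀ i, x i ∈ Set.Icc (w i) (w i + δ)},
      ∀ y ∈ {x : Fin N → ℝ | ∀ i, x i ∈ Set.Icc (w i) (w i + δ)},
        |interpLam w δ f x - interpLam w δ f y| ≤ L * ∑ i, |x i - y i| :=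
  statement16_general w δ hδ D hCD f L hfLip
end
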